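/- arXiv:2203.06594 — 5 statements merged into one kernel-verified Lean document; each statement's English description precedes it below -/
import Mathlib

section
/- Let G be a graph of size q with a local antimagic labeling f inducing exactly 2 colors x and y with x < y, and let X and Y be the sets of vertices with induced color x and y respectively. Then G is bipartite with bipartition (X, Y), |X| > |Y|, and x·|X| = y·|Y| = q(q+1)/2. -/
open Finset

variable {V : Type*} [Fintype V] [DecidableEq V]

/-- The induced vertex sum `f⁺(v)`: sum of labels of edges incident to `v`. -/
def fplus (G : SimpleGraph V) [DecidableRel G.Adj] (f : Sym2 V → ℕ) (v : V) : ℕ :=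
  ∑ e ∈ G.edgeFinset.filter (fun e => v ∈ e), f e

/-- `f` is a local antimagic labeling of `G`: it is a bijection from the edges of `G`
onto `{1, …, q}` and adjacent vertices get distinct induced sums. -/
def IsLocalAntimagic (G : SimpleGraph V) [DecidableRel G.Adj] (f : Sym2 V → ℕ) : Prop :=
  Set.BijOn f ↑G.edgeFinset ↑(Finset.Icc 1 G.edgeFinset.card) ∧
  ∀ ⦃u v : V⦄, G.Adj u v → fplus G f u ≠ fplus G f v

/-- The number of distinct induced vertex colors of the labeling `f`. -/
def colorCount (G : SimpleGraph V) [DecidableRel G.Adj] (f : Sym2 V → ℕ) : ℕ :=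
  (Finset.univ.image (fplus G f)).card

/-- The local antimagic chromatic number `χ_la(G)`. -/
noncomputable def chiLA (G : SimpleGraph V) [DecidableRel G.Adj] : ℕ :=
  sInf {t | ∃ f : Sym2 V → ℕ, IsLocalAntimagic G f ∧ colorCount G f = t}

/-- Decidability of adjacency for graphs built with `SimpleGraph.fromRel`. -/
instance fromRelDecidable {α : Type*} [DecidableEq α] (r : α → α → Prop) [DecidableRel r] :
    DecidableRel (SimpleGraph.fromRel r).Adj := fun a b =>
  decidable_of_iff _ (SimpleGraph.fromRel_adj r a b).symm

theorem local_antimagic_two_colors (G : SimpleGraph V) [DecidableRel G.Adj]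
    (f : Sym2 V → ℕ) (x y : ℕ) (hxy : x < y) (hf : IsLocalAntimagic G f)
    (him : Finset.univ.image (fplus G f) = {x, y}) :
    (∀ ⦃u v : V⦄, G.Adj u v →
        (fplus G f u = x ∧ fplus G f v = y) ∨ (fplus G f u = y ∧ fplus G f v = x)) ∧
      (Finset.univ.filter fun v => fplus G f v = y).card <
        (Finset.univ.filter fun v => fplus G f v = x).card ∧
      x * (Finset.univ.filter fun v => fplus G f v = x).card =
        G.edgeFinset.card * (G.edgeFinset.card + 1) / 2 ∧
      y * (Finset.univ.filter fun v => fplus G f v = y).card =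
        G.edgeFinset.card * (G.edgeFinset.card + 1) / 2 := by
  obtain ⟨hbij, hadj⟩ := hf
  set q := G.edgeFinset.card with hq
  have hne : x ≠ y := hxy.ne
  have hmem : ∀ v : V, fplus G f v = x ∨ fplus G f v = y := by
    intro v
    have : fplus G f v ∈ Finset.univ.image (fplus G f) :=
      Finset.mem_image_of_mem _ (Finset.mem_univ v)
    rw [him] at this
    simpa using this
  have key : ∀ ⦃u v : V⦄, G.Adj u v →
      (fplus G f u = x ∧ fplus G f v = y) ∨ (fplus G f u = y ∧ fplus G f v = x) := by
    intro u v huv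
    rcases hmem u with hu | hu <;> rcases hmem v with hv | hv
    · exact absurd (hu.trans hv.symm) (hadj huv)
    · exact Or.inl ⟨hu, hv⟩
    · exact Or.inr ⟨hu, hv⟩
    · exact absurd (hu.trans hv.symm) (hadj huv)
  set X := Finset.univ.filter fun v => fplus G f v = x with hX
  set Y := Finset.univ.filter fun v => fplus G f v = y with hY
  -- the sum of the labels
  have hsum2 : (∑ e ∈ G.edgeFinset, f e) * 2 = q * (q + 1) := by
    have h1 : ∑ e ∈ G.edgeFinset, f e = ∑ i ∈ Finset.Icc 1 q, i := by
      refine Finset.sum_bij (fun e _ => f e) ?_ ?_ ?_ ?_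
      · intro e he
        have := hbij.1 (by simpa using he)
        simpa using this
      · intro a ha b hb hab
        exact hbij.2.1 (by simpa using ha) (by simpa using hb) hab
      · intro b hb
        obtain ⟨a, ha, rfl⟩ := hbij.2.2 (by simpa using hb)
        exact ⟨a, by simpa using ha, rfl⟩
      · intro a _; rfl
    have h2 : Finset.range (q + 1) = insert 0 (Finset.Icc 1 q) := by
      ext i; simp; omega
    have h3 := Finset.sum_range_id_mul_two (q + 1)
    rw [h2, Finset.sum_insert (by simp)] at h3
    simp only [zero_add] at h3
    rw [Nat.add_sub_cancel] at h3
    rw [h1, h3, Nat.mul_comm]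
  -- each edge has exactly one endpoint in X and one in Y
  have hone : ∀ e ∈ G.edgeFinset, (X.filter (fun v => v ∈ e)).card = 1 ∧
      (Y.filter (fun v => v ∈ e)).card = 1 := by
    intro e he
    induction e using Sym2.ind with
    | _ a b =>
      rw [SimpleGraph.mem_edgeFinset, SimpleGraph.mem_edgeSet] at he
      have hab : a ≠ b := he.ne
      rcases key he with ⟨ha, hb⟩ | ⟨ha, hb⟩
      · constructor
        · rw [Finset.card_eq_one]
          refine ⟨a, ?_⟩
          ext v
          simp only [hX, Finset.mem_filter, Finset.mem_univ, true_and, Sym2.mem_iff,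
            Finset.mem_singleton]
          constructor
          · rintro ⟨hv, rfl | rfl⟩
            · rfl
            · exact absurd (hv.symm.trans hb) hne
          · rintro rfl; exact ⟨ha, Or.inl rfl⟩
        · rw [Finset.card_eq_one]
          refine ⟨b, ?_⟩
          ext v
          simp only [hY, Finset.mem_filter, Finset.mem_univ, true_and, Sym2.mem_iff,
            Finset.mem_singleton]
          constructor
          · rintro ⟨hv, rfl | rfl⟩
            · exact absurd (hv.symm.trans ha) (Ne.symm hne)
            · rfl
          · rintro rfl; exact ⟨hb, Or.inr rfl⟩
      · constructor
        · rw [Finset.card_eq_one]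
          refine ⟨b, ?_⟩
          ext v
          simp only [hX, Finset.mem_filter, Finset.mem_univ, true_and, Sym2.mem_iff,
            Finset.mem_singleton]
          constructor
          · rintro ⟨hv, rfl | rfl⟩
            · exact absurd (hv.symm.trans ha) hne
            · rfl
          · rintro rfl; exact ⟨hb, Or.inr rfl⟩
        · rw [Finset.card_eq_one]
          refine ⟨a, ?_⟩
          ext v
          simp only [hY, Finset.mem_filter, Finset.mem_univ, true_and, Sym2.mem_iff,
            Finset.mem_singleton]
          constructor
          · rintro ⟨hv, rfl | rfl⟩
            · rfl
            · exact absurd (hv.symm.trans hb) (Ne.symm hne)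
          · rintro rfl; exact ⟨ha, Or.inl rfl⟩
  -- partial sums over X and Y
  have hpart : ∀ (Z : Finset V), (∀ e ∈ G.edgeFinset, (Z.filter (fun v => v ∈ e)).card = 1) →
      ∑ v ∈ Z, fplus G f v = ∑ e ∈ G.edgeFinset, f e := by
    intro Z hZ
    calc ∑ v ∈ Z, fplus G f v
        = ∑ v ∈ Z, ∑ e ∈ G.edgeFinset, if v ∈ e then f e else 0 := by
          unfold fplus; simp [Finset.sum_filter]
      _ = ∑ e ∈ G.edgeFinset, ∑ v ∈ Z, if v ∈ e then f e else 0 := Finset.sum_comm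
      _ = ∑ e ∈ G.edgeFinset, (Z.filter (fun v => v ∈ e)).card * f e := by
          refine Finset.sum_congr rfl fun e _ => ?_
          rw [← Finset.sum_filter, Finset.sum_const, smul_eq_mul]
      _ = ∑ e ∈ G.edgeFinset, f e := by
          refine Finset.sum_congr rfl fun e he => ?_
          rw [hZ e he, one_mul]
  have hXsum : x * X.card = ∑ e ∈ G.edgeFinset, f e := by
    rw [← hpart X (fun e he => (hone e he).1)]
    rw [Finset.sum_congr rfl (fun v hv => by
      simp only [hX, Finset.mem_filter] at hv; exact hv.2)]
    rw [Finset.sum_const, smul_eq_mul, mul_comm]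
  have hYsum : y * Y.card = ∑ e ∈ G.edgeFinset, f e := by
    rw [← hpart Y (fun e he => (hone e he).2)]
    rw [Finset.sum_congr rfl (fun v hv => by
      simp only [hY, Finset.mem_filter] at hv; exact hv.2)]
    rw [Finset.sum_const, smul_eq_mul, mul_comm]
  have hx2 : x * X.card * 2 = q * (q + 1) := by rw [hXsum]; exact hsum2
  have hy2 : y * Y.card * 2 = q * (q + 1) := by rw [hYsum]; exact hsum2
  have hxq : x * X.card = q * (q + 1) / 2 :=
    (Nat.div_eq_of_eq_mul_left (by norm_num) hx2.symm).symm
  have hyq : y * Y.card = q * (q + 1) / 2 :=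
    (Nat.div_eq_of_eq_mul_left (by norm_num) hy2.symm).symm
  -- Y nonempty, hence cardinality comparison
  have hYne : 0 < Y.card := by
    have : y ∈ Finset.univ.image (fplus G f) := by rw [him]; simp
    obtain ⟨v, _, hv⟩ := Finset.mem_image.mp this
    exact Finset.card_pos.mpr ⟨v, by simp [hY, hv]⟩
  have hlt : Y.card < X.card := by
    have heq : x * X.card = y * Y.card := hXsum.trans hYsum.symm
    by_contra h
    push_neg at h
    have h1 : x * X.card ≤ x * Y.card := Nat.mul_le_mul_left x h
    have h2 : x * Y.card < y * Y.card := (Nat.mul_lt_mul_right hYne).mpr hxy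
    omega
  exact ⟨key, hlt, hxq, hyq⟩
end

section
/- Let G be a connected bipartite graph with q edges and bipartition (V₁, V₂). If the local antimagic chromatic number of G equals 2, then |V₁| ≠ |V₂|, and both |V₁| and |V₂| divide q(q+1)/2. -/
open Finset

variable {V : Type*} [Fintype V] [DecidableEq V]

lemma eq_iff_of_two {a b x y : ℕ} (hab : a ≠ b)
    (hx : x = a ∨ x = b) (hy : y = a ∨ y = b) :
    x = y ↔ (x = a ↔ y = a) := by
  rcases hx with rfl | rfl <;> rcases hy with rfl | rfl <;> simp [hab, hab.symm]

lemma color_step {a b c1 c2 c3 : ℕ} (hab : a ≠ b)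
    (h1 : c1 = a ∨ c1 = b) (h2 : c2 = a ∨ c2 = b) (h3 : c3 = a ∨ c3 = b)
    (hne : c1 ≠ c2) {P1 P2 P3 : Prop}
    (hP : P1 ↔ ¬P2) (ih : c2 = c3 ↔ (P2 ↔ P3)) :
    c1 = c3 ↔ (P1 ↔ P3) := by
  rw [eq_iff_of_two hab h1 h3]
  rw [eq_iff_of_two hab h2 h3] at ih
  have hne' : ¬(c1 = a ↔ c2 = a) := fun h => hne ((eq_iff_of_two hab h1 h2).mpr h)
  by_cases q1 : c1 = a <;> by_cases q2 : c2 = a <;> by_cases q3 : c3 = a <;>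
    by_cases hp2 : P2 <;> by_cases hp3 : P3 <;> simp_all

theorem chiLA_eq_two_of_bipartite (G : SimpleGraph V) [DecidableRel G.Adj]
    (hconn : G.Connected) (V₁ V₂ : Finset V) (hdisj : Disjoint V₁ V₂)
    (hcover : V₁ ∪ V₂ = Finset.univ)
    (hbip : ∀ ⦃u v : V⦄, G.Adj u v → (u ∈ V₁ ∧ v ∈ V₂) ∨ (u ∈ V₂ ∧ v ∈ V₁))
    (h2 : chiLA G = 2) :
    V₁.card ≠ V₂.card ∧
      V₁.card ∣ G.edgeFinset.card * (G.edgeFinset.card + 1) / 2 ∧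
      V₂.card ∣ G.edgeFinset.card * (G.edgeFinset.card + 1) / 2 := by
  classical
  set q := G.edgeFinset.card with hq
  -- extract a labeling with exactly two colors
  have hne : {t | ∃ f : Sym2 V → ℕ, IsLocalAntimagic G f ∧ colorCount G f = t}.Nonempty := by
    by_contra h
    rw [Set.not_nonempty_iff_eq_empty] at h
    rw [chiLA, h, Nat.sInf_empty] at h2
    exact two_ne_zero h2.symm
  have hmem := Nat.sInf_mem hne
  rw [chiLA] at h2
  rw [h2] at hmem
  obtain ⟨f, ⟨hbij, hadj⟩, hcc⟩ := hmem
  -- the two colors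
  rw [colorCount] at hcc
  obtain ⟨a, b, hab, habs⟩ := Finset.card_eq_two.mp hcc
  have hval : ∀ v : V, fplus G f v = a ∨ fplus G f v = b := by
    intro v
    have : fplus G f v ∈ Finset.univ.image (fplus G f) :=
      Finset.mem_image_of_mem _ (Finset.mem_univ v)
    rw [habs] at this
    simpa using this
  have hd := Finset.disjoint_left.mp hdisj
  have hmem1 : ∀ w : V, w ∈ V₁ ↔ w ∉ V₂ := by
    intro w
    constructor
    · intro h1 h2
      exact (Finset.disjoint_left.mp hdisj) h1 h2
    · intro h2
      have : w ∈ V₁ ∪ V₂ := hcover ▸ Finset.mem_univ w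
      rcases Finset.mem_union.mp this with h | h
      · exact h
      · exact absurd h h2
  -- along any walk, equal colors iff same side
  have key : ∀ u v : V, ∀ _ : G.Walk u v,
      (fplus G f u = fplus G f v ↔ (u ∈ V₁ ↔ v ∈ V₁)) := by
    intro u v p
    induction p with
    | nil => simp
    | @cons u x v h p ih =>
      have h1 : fplus G f u ≠ fplus G f x := hadj h
      have h2 : (u ∈ V₁ ↔ x ∉ V₁) := by
        rcases hbip h with ⟨hu, hx⟩ | ⟨hu, hx⟩
        · exact iff_of_true hu (fun hx1 => hd hx1 hx)
        · exact iff_of_false (fun hu1 => hd hu1 hu) (not_not_intro hx)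
      exact color_step hab (hval u) (hval x) (hval v) h1 h2 ih
  have hreach : ∀ u v : V, ∃ _ : G.Walk u v, True := by
    intro u v
    obtain ⟨p⟩ := hconn.preconnected u v
    exact ⟨p, trivial⟩
  have key' : ∀ u v : V, (fplus G f u = fplus G f v ↔ (u ∈ V₁ ↔ v ∈ V₁)) := by
    intro u v
    obtain ⟨p, -⟩ := hreach u v
    exact key u v p
  -- get representatives of each side with distinct colors
  have ha : ∃ x : V, fplus G f x = a := by
    have : a ∈ Finset.univ.image (fplus G f) := by rw [habs]; simp
    obtain ⟨x, -, hx⟩ := Finset.mem_image.mp this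
    exact ⟨x, hx⟩
  have hb : ∃ y : V, fplus G f y = b := by
    have : b ∈ Finset.univ.image (fplus G f) := by rw [habs]; simp
    obtain ⟨y, -, hy⟩ := Finset.mem_image.mp this
    exact ⟨y, hy⟩
  obtain ⟨x, hx⟩ := ha
  obtain ⟨y, hy⟩ := hb
  have hxy : ¬ (x ∈ V₁ ↔ y ∈ V₁) := by
    rw [← key' x y, hx, hy]; exact hab
  -- u₁ ∈ V₁, u₂ ∈ V₂ with distinct colors
  obtain ⟨u₁, u₂, hu₁, hu₂, hAB⟩ :
      ∃ u₁ u₂ : V, u₁ ∈ V₁ ∧ u₂ ∈ V₂ ∧ fplus G f u₁ ≠ fplus G f u₂ := by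
    by_cases hx1 : x ∈ V₁
    · have hy2 : y ∈ V₂ := by
        by_contra h
        exact hxy (iff_of_true hx1 ((hmem1 y).mpr h))
      exact ⟨x, y, hx1, hy2, by rw [hx, hy]; exact hab⟩
    · have hy1 : y ∈ V₁ := by
        by_contra h
        exact hxy (iff_of_false hx1 h)
      have hx2 : x ∈ V₂ := by
        by_contra h
        exact hx1 ((hmem1 x).mpr h)
      exact ⟨y, x, hy1, hx2, by rw [hx, hy]; exact hab.symm⟩
  set A := fplus G f u₁ with hA
  set B := fplus G f u₂ with hB
  have hconst1 : ∀ v ∈ V₁, fplus G f v = A := by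
    intro v hv
    rw [key' v u₁]
    simp [hv, hu₁]
  have hconst2 : ∀ v ∈ V₂, fplus G f v = B := by
    intro v hv
    rw [key' v u₂]
    constructor <;> intro h
    · exact absurd ((hmem1 v).mp h) (by simp [hv])
    · exact absurd ((hmem1 u₂).mp h) (by simp [hu₂])
  -- edge counting: each edge meets each side exactly once
  have hcount : ∀ (W : Finset V), (∀ ⦃u v : V⦄, G.Adj u v → (u ∈ W ↔ v ∉ W)) →
      ∀ e ∈ G.edgeFinset, (W.filter (fun v => v ∈ e)).card = 1 := by
    intro W hW e he
    induction e with
    | _ s t =>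
      rw [SimpleGraph.mem_edgeFinset, SimpleGraph.mem_edgeSet] at he
      have hst : s ≠ t := he.ne
      by_cases hs : s ∈ W
      · have ht : t ∉ W := (hW he).mp hs
        have : W.filter (fun v => v ∈ s(s, t)) = {s} := by
          ext w
          simp only [Finset.mem_filter, Sym2.mem_iff, Finset.mem_singleton]
          constructor
          · rintro ⟨hw, rfl | rfl⟩
            · rfl
            · exact absurd hw ht
          · rintro rfl; exact ⟨hs, Or.inl rfl⟩
        rw [this]; simp
      · have ht : t ∈ W := by
          by_contra ht
          exact ht ((hW he.symm).mpr hs)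
        have : W.filter (fun v => v ∈ s(s, t)) = {t} := by
          ext w
          simp only [Finset.mem_filter, Sym2.mem_iff, Finset.mem_singleton]
          constructor
          · rintro ⟨hw, rfl | rfl⟩
            · exact absurd hw hs
            · rfl
          · rintro rfl; exact ⟨ht, Or.inr rfl⟩
        rw [this]; simp
  have hside1 : ∀ ⦃u v : V⦄, G.Adj u v → (u ∈ V₁ ↔ v ∉ V₁) := by
    intro u v h
    rcases hbip h with ⟨hu, hv⟩ | ⟨hu, hv⟩
    · exact iff_of_true hu (fun hv1 => hd hv1 hv)
    · exact iff_of_false (fun hu1 => hd hu1 hu) (not_not_intro hv)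
  have hside2 : ∀ ⦃u v : V⦄, G.Adj u v → (u ∈ V₂ ↔ v ∉ V₂) := by
    intro u v h
    rcases hbip h with ⟨hu, hv⟩ | ⟨hu, hv⟩
    · exact iff_of_false (fun hu2 => hd hu hu2) (not_not_intro hv)
    · exact iff_of_true hu (fun hv2 => hd hv hv2)
  -- the sum over one side is the total label sum
  have hsum : ∀ (W : Finset V), (∀ e ∈ G.edgeFinset, (W.filter (fun v => v ∈ e)).card = 1) →
      ∑ v ∈ W, fplus G f v = ∑ e ∈ G.edgeFinset, f e := by
    intro W hW
    unfold fplus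
    simp_rw [Finset.sum_filter]
    rw [Finset.sum_comm]
    refine Finset.sum_congr rfl fun e he => ?_
    rw [← Finset.sum_filter, Finset.sum_const, hW e he, one_smul]
  -- total label sum is q(q+1)/2
  have himg : G.edgeFinset.image f = Finset.Icc 1 q := by
    apply Finset.coe_injective
    rw [Finset.coe_image]
    exact hbij.image_eq
  have htot : (∑ e ∈ G.edgeFinset, f e) * 2 = q * (q + 1) := by
    have h1 : ∑ e ∈ G.edgeFinset, f e = ∑ k ∈ Finset.Icc 1 q, k := by
      rw [← himg, Finset.sum_image]
      intro e he e' he' hee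
      exact hbij.injOn (by simpa using he) (by simpa using he') hee
    have h2 : (∑ k ∈ Finset.Icc 1 q, k) * 2 = q * (q + 1) := by
      induction q with
      | zero => simp
      | succ n ih =>
        rw [Finset.sum_Icc_succ_top (by omega), add_mul, ih]
        ring
    rw [h1, h2]
  have hS1 : V₁.card * A * 2 = q * (q + 1) := by
    have : ∑ v ∈ V₁, fplus G f v = V₁.card * A := by
      rw [Finset.sum_congr rfl hconst1, Finset.sum_const, smul_eq_mul]
    rw [← this, hsum V₁ (hcount V₁ hside1), htot]
  have hS2 : V₂.card * B * 2 = q * (q + 1) := by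
    have : ∑ v ∈ V₂, fplus G f v = V₂.card * B := by
      rw [Finset.sum_congr rfl hconst2, Finset.sum_const, smul_eq_mul]
    rw [← this, hsum V₂ (hcount V₂ hside2), htot]
  have hhalf1 : q * (q + 1) / 2 = V₁.card * A := by omega
  have hhalf2 : q * (q + 1) / 2 = V₂.card * B := by omega
  refine ⟨?_, ⟨A, hhalf1⟩, ⟨B, hhalf2⟩⟩
  intro hcard
  have hV1pos : 0 < V₁.card := Finset.card_pos.mpr ⟨u₁, hu₁⟩
  have : V₁.card * A = V₁.card * B := by rw [hhalf1.symm, hcard, hhalf2]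
  exact hAB (Nat.eq_of_mul_eq_mul_left hV1pos this)
end

section
/- Let G = (X,Y) be a bipartite graph of size q with |X| = |Y| = 4, containing the cube graph C₄ × P₂ as a spanning subgraph, and with 12 ≤ q ≤ 14. Then the local antimagic chromatic number of G is at least 4. -/
set_option maxRecDepth 1000000
set_option linter.unusedSectionVars false


open Finset

variable {V : Type*} [Fintype V] [DecidableEq V]

/-- The cube graph `C₄ × P₂` (the 3-dimensional hypercube `Q₃`), as a graph on
`Fin 4 × Fin 2`: a 4-cycle on each level, plus vertical edges. -/
def cubeGraph : SimpleGraph (Fin 4 × Fin 2) :=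
  SimpleGraph.fromRel (fun a b =>
    (a.2 = b.2 ∧ (a.1 = b.1 + 1 ∨ b.1 = a.1 + 1)) ∨ (a.1 = b.1 ∧ a.2 ≠ b.2))

lemma sum_label_eq (G : SimpleGraph V) [DecidableRel G.Adj] (f : Sym2 V → ℕ)
    (hf : Set.BijOn f ↑G.edgeFinset ↑(Finset.Icc 1 G.edgeFinset.card)) :
    ∑ z ∈ G.edgeFinset, f z = ∑ i ∈ Finset.Icc 1 G.edgeFinset.card, i := by
  have himg : G.edgeFinset.image f = Finset.Icc 1 G.edgeFinset.card := by
    apply Finset.coe_injective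
    rw [Finset.coe_image]
    exact hf.image_eq
  rw [← himg, Finset.sum_image (fun x hx y hy h => hf.injOn hx hy h)]

lemma sum_part_eq (G : SimpleGraph V) [DecidableRel G.Adj] (f : Sym2 V → ℕ)
    (X Y : Finset V) (hdisj : Disjoint X Y)
    (hbip : ∀ ⦃u v : V⦄, G.Adj u v → (u ∈ X ∧ v ∈ Y) ∨ (u ∈ Y ∧ v ∈ X)) :
    ∑ u ∈ X, fplus G f u = ∑ z ∈ G.edgeFinset, f z := by
  have hone : ∀ z ∈ G.edgeFinset, (X.filter (fun v => v ∈ z)).card = 1 := by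
    intro z hz
    induction z using Sym2.ind with
    | _ a b =>
      rw [SimpleGraph.mem_edgeFinset, SimpleGraph.mem_edgeSet] at hz
      rcases hbip hz with ⟨ha, hb⟩ | ⟨ha, hb⟩
      · have : X.filter (fun v => v ∈ s(a, b)) = {a} := by
          ext w
          simp only [Finset.mem_filter, Sym2.mem_iff, Finset.mem_singleton]
          constructor
          · rintro ⟨hw, rfl | rfl⟩
            · rfl
            · exact absurd hb (Finset.disjoint_left.1 hdisj hw)
          · rintro rfl; exact ⟨ha, Or.inl rfl⟩
        rw [this, Finset.card_singleton]
      · have : X.filter (fun v => v ∈ s(a, b)) = {b} := by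
          ext w
          simp only [Finset.mem_filter, Sym2.mem_iff, Finset.mem_singleton]
          constructor
          · rintro ⟨hw, rfl | rfl⟩
            · exact absurd ha (Finset.disjoint_left.1 hdisj hw)
            · rfl
          · rintro rfl; exact ⟨hb, Or.inr rfl⟩
        rw [this, Finset.card_singleton]
  calc ∑ u ∈ X, fplus G f u
      = ∑ u ∈ X, ∑ z ∈ G.edgeFinset, if u ∈ z then f z else 0 := by
        refine Finset.sum_congr rfl fun u _ => ?_
        rw [fplus, Finset.sum_filter]
    _ = ∑ z ∈ G.edgeFinset, ∑ u ∈ X, if u ∈ z then f z else 0 := Finset.sum_comm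
    _ = ∑ z ∈ G.edgeFinset, f z := by
        refine Finset.sum_congr rfl fun z hz => ?_
        rw [← Finset.sum_filter, Finset.sum_const, hone z hz, one_smul]

lemma lower_bound (G : SimpleGraph V) [DecidableRel G.Adj] (X Y : Finset V)
    (hX : X.card = 4) (hY : Y.card = 4) (hdisj : Disjoint X Y)
    (hcover : X ∪ Y = Finset.univ)
    (hbip : ∀ ⦃u v : V⦄, G.Adj u v → (u ∈ X ∧ v ∈ Y) ∨ (u ∈ Y ∧ v ∈ X))
    (hub : ∀ v ∈ Y, (X.filter (fun u => ¬ G.Adj u v)).card ≤ 1)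
    (hub' : ∀ u ∈ X, (Y.filter (fun w => ¬ G.Adj w u)).card ≤ 1)
    (hq1 : 12 ≤ G.edgeFinset.card) (hq2 : G.edgeFinset.card ≤ 14)
    (f : Sym2 V → ℕ) (hf : IsLocalAntimagic G f) : 4 ≤ colorCount G f := by
  set fp := fplus G f with hfp
  set q := G.edgeFinset.card with hqdef
  set S := ∑ i ∈ Finset.Icc 1 q, i with hSdef
  -- X-sum and Y-sum both equal S
  have hsumX : ∑ u ∈ X, fp u = S := by
    rw [hfp, sum_part_eq G f X Y hdisj hbip, sum_label_eq G f hf.1]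
  have hsumY : ∑ u ∈ Y, fp u = S := by
    rw [hfp, sum_part_eq G f Y X hdisj.symm (fun u v h => (hbip h).symm), sum_label_eq G f hf.1]
  have hS : S = 78 ∨ S = 91 ∨ S = 105 := by
    have hq : q = 12 ∨ q = 13 ∨ q = 14 := by omega
    rcases hq with h | h | h <;> rw [hSdef, h]
    · left; decide
    · right; left; decide
    · right; right; decide
  -- uniqueness of shared-color representatives
  have huniq : ∀ u ∈ X, ∀ u' ∈ X, ∀ v ∈ Y, fp u = fp v → fp u' = fp v → u = u' := by
    intro u hu u' hu' v hv h1 h2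
    have m1 : u ∈ X.filter (fun w => ¬ G.Adj w v) :=
      Finset.mem_filter.2 ⟨hu, fun hadj => hf.2 hadj h1⟩
    have m2 : u' ∈ X.filter (fun w => ¬ G.Adj w v) :=
      Finset.mem_filter.2 ⟨hu', fun hadj => hf.2 hadj h2⟩
    exact Finset.card_le_one.1 (hub v hv) _ m1 _ m2
  have huniq' : ∀ v ∈ Y, ∀ v' ∈ Y, ∀ u ∈ X, fp v = fp u → fp v' = fp u → v = v' := by
    intro v hv v' hv' u hu h1 h2
    have m1 : v ∈ Y.filter (fun w => ¬ G.Adj w u) :=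
      Finset.mem_filter.2 ⟨hv, fun hadj => hf.2 hadj h1⟩
    have m2 : v' ∈ Y.filter (fun w => ¬ G.Adj w u) :=
      Finset.mem_filter.2 ⟨hv', fun hadj => hf.2 hadj h2⟩
    exact Finset.card_le_one.1 (hub' u hu) _ m1 _ m2
  by_contra hcon
  push_neg at hcon
  set A := X.image fp with hA
  set B := Y.image fp with hB
  have hXne : X.Nonempty := Finset.card_pos.1 (by omega)
  have hYne : Y.Nonempty := Finset.card_pos.1 (by omega)
  have hABcard : (A ∪ B).card ≤ 3 := by
    have : Finset.univ.image fp = A ∪ B := by rw [← hcover, Finset.image_union]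
    have h2 : colorCount G f = (A ∪ B).card := by rw [colorCount, ← this]
    omega
  -- B not a subset of A
  have hnotBA : ¬ B ⊆ A := by
    intro hBA
    have hinj : Set.InjOn fp ↑Y := by
      intro y hy y' hy' hyy
      rw [Finset.mem_coe] at hy hy'
      have : fp y ∈ A := hBA (Finset.mem_image_of_mem fp hy)
      obtain ⟨x, hx, hxy⟩ := Finset.mem_image.1 this
      exact huniq' y hy y' hy' x hx hxy.symm (by rw [← hyy]; exact hxy.symm)
    have : B.card = 4 := by rw [hB, Finset.card_image_of_injOn hinj, hY]
    have : B.card ≤ (A ∪ B).card := Finset.card_le_card Finset.subset_union_right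
    omega
  have hnotAB : ¬ A ⊆ B := by
    intro hAB
    have hinj : Set.InjOn fp ↑X := by
      intro x hx x' hx' hxx
      rw [Finset.mem_coe] at hx hx'
      have : fp x ∈ B := hAB (Finset.mem_image_of_mem fp hx)
      obtain ⟨y, hy, hyx⟩ := Finset.mem_image.1 this
      exact huniq x hx x' hx' y hy hyx.symm (by rw [← hxx]; exact hyx.symm)
    have : A.card = 4 := by rw [hA, Finset.card_image_of_injOn hinj, hX]
    have : A.card ≤ (A ∪ B).card := Finset.card_le_card Finset.subset_union_left
    omega
  obtain ⟨b0, hb0A, hb0B⟩ := Finset.not_subset.1 hnotAB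
  obtain ⟨c0, hc0B, hc0A⟩ := Finset.not_subset.1 hnotBA
  -- A and B have at least 2 elements
  have hA2 : 2 ≤ A.card := by
    by_contra h
    push_neg at h
    have hmono : ∀ u ∈ X, fp u = b0 := fun u hu =>
      Finset.card_le_one.1 (show A.card ≤ 1 by omega) _ (Finset.mem_image_of_mem fp hu) _ hb0A
    have : ∑ u ∈ X, fp u = 4 * b0 := by
      rw [Finset.sum_congr rfl hmono, Finset.sum_const, hX, smul_eq_mul]
    omega
  have hB2 : 2 ≤ B.card := by
    by_contra h
    push_neg at h
    have hmono : ∀ u ∈ Y, fp u = c0 := fun u hu =>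
      Finset.card_le_one.1 (show B.card ≤ 1 by omega) _ (Finset.mem_image_of_mem fp hu) _ hc0B
    have : ∑ u ∈ Y, fp u = 4 * c0 := by
      rw [Finset.sum_congr rfl hmono, Finset.sum_const, hY, smul_eq_mul]
    omega
  -- get a shared color a0
  have hinter : 1 ≤ (A ∩ B).card := by
    have := Finset.card_union_add_card_inter A B
    omega
  obtain ⟨a0, ha0⟩ := Finset.card_pos.1 (by omega : 0 < (A ∩ B).card)
  have ha0A : a0 ∈ A := (Finset.mem_inter.1 ha0).1
  have ha0B : a0 ∈ B := (Finset.mem_inter.1 ha0).2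
  have hab : a0 ≠ b0 := fun h => hb0B (h ▸ ha0B)
  have hac : a0 ≠ c0 := fun h => hc0A (h ▸ ha0A)
  have hbc : b0 ≠ c0 := fun h => hc0A (h ▸ hb0A)
  -- A ∪ B = {a0, b0, c0}
  have htrip : ({a0, b0, c0} : Finset ℕ) ⊆ A ∪ B := by
    intro x hx
    simp only [Finset.mem_insert, Finset.mem_singleton] at hx
    rcases hx with rfl | rfl | rfl
    · exact Finset.mem_union_left _ ha0A
    · exact Finset.mem_union_left _ hb0A
    · exact Finset.mem_union_right _ hc0B
  have htripcard : ({a0, b0, c0} : Finset ℕ).card = 3 := by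
    rw [Finset.card_insert_of_notMem (by simp [hab, hac]),
      Finset.card_insert_of_notMem (by simp [hbc]), Finset.card_singleton]
  have hunion : A ∪ B = {a0, b0, c0} :=
    (Finset.eq_of_subset_of_card_le htrip (by omega)).symm
  have hAsub : A ⊆ ({a0, b0} : Finset ℕ) := by
    intro x hx
    have : x ∈ ({a0, b0, c0} : Finset ℕ) := hunion ▸ Finset.mem_union_left _ hx
    simp only [Finset.mem_insert, Finset.mem_singleton] at this ⊢
    rcases this with rfl | rfl | rfl
    · exact Or.inl rfl
    · exact Or.inr rfl
    · exact absurd hx hc0A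
  have hBsub : B ⊆ ({a0, c0} : Finset ℕ) := by
    intro x hx
    have : x ∈ ({a0, b0, c0} : Finset ℕ) := hunion ▸ Finset.mem_union_right _ hx
    simp only [Finset.mem_insert, Finset.mem_singleton] at this ⊢
    rcases this with rfl | rfl | rfl
    · exact Or.inl rfl
    · exact absurd hx hb0B
    · exact Or.inr rfl
  -- unique representatives of a0
  obtain ⟨x0, hx0X, hx0⟩ := Finset.mem_image.1 ha0A
  obtain ⟨y0, hy0Y, hy0⟩ := Finset.mem_image.1 ha0B
  -- X sum: a0 + 3*b0
  have hXsum' : ∑ u ∈ X, fp u = a0 + 3 * b0 := by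
    rw [← Finset.add_sum_erase _ _ hx0X, hx0]
    congr 1
    have hall : ∀ u ∈ X.erase x0, fp u = b0 := by
      intro u hu
      have huX : u ∈ X := Finset.mem_of_mem_erase hu
      have hune : u ≠ x0 := Finset.ne_of_mem_erase hu
      have : fp u ∈ ({a0, b0} : Finset ℕ) := hAsub (Finset.mem_image_of_mem fp huX)
      simp only [Finset.mem_insert, Finset.mem_singleton] at this
      rcases this with h | h
      · exact absurd (huniq u huX x0 hx0X y0 hy0Y (by rw [h, hy0]) (by rw [hx0, hy0])) hune
      · exact h
    rw [Finset.sum_congr rfl hall, Finset.sum_const, Finset.card_erase_of_mem hx0X, hX,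
      smul_eq_mul]
  have hYsum' : ∑ u ∈ Y, fp u = a0 + 3 * c0 := by
    rw [← Finset.add_sum_erase _ _ hy0Y, hy0]
    congr 1
    have hall : ∀ u ∈ Y.erase y0, fp u = c0 := by
      intro u hu
      have huY : u ∈ Y := Finset.mem_of_mem_erase hu
      have hune : u ≠ y0 := Finset.ne_of_mem_erase hu
      have : fp u ∈ ({a0, c0} : Finset ℕ) := hBsub (Finset.mem_image_of_mem fp huY)
      simp only [Finset.mem_insert, Finset.mem_singleton] at this
      rcases this with h | h
      · exact absurd (huniq' u huY y0 hy0Y x0 hx0X (by rw [h, hx0]) (by rw [hy0, hx0])) hune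
      · exact h
    rw [Finset.sum_congr rfl hall, Finset.sum_const, Finset.card_erase_of_mem hy0Y, hY,
      smul_eq_mul]
  have : b0 = c0 := by omega
  exact hbc this

-- ### concrete side
abbrev Wc := Fin 4 × Fin 2
instance : DecidableRel cubeGraph.Adj := fromRelDecidable _
def parB (a : Wc) : Bool := (a.1.val + a.2.val) % 2 == 0
def diagRel (d : Fin 4 → Bool) (a b : Wc) : Prop :=
  ∃ i : Fin 4, d i = true ∧ a = (i, 0) ∧ b = (i + 2, 1)
instance (d : Fin 4 → Bool) : DecidableRel (diagRel d) := fun a b => by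
  unfold diagRel; infer_instance
def Hrel (d : Fin 4 → Bool) (a b : Wc) : Prop :=
  ((a.2 = b.2 ∧ (a.1 = b.1 + 1 ∨ b.1 = a.1 + 1)) ∨ (a.1 = b.1 ∧ a.2 ≠ b.2)) ∨ diagRel d a b
instance (d : Fin 4 → Bool) : DecidableRel (Hrel d) := fun a b => by
  unfold Hrel; infer_instance
def Hd (d : Fin 4 → Bool) : SimpleGraph Wc := SimpleGraph.fromRel (Hrel d)
instance (d : Fin 4 → Bool) : DecidableRel (Hd d).Adj := fromRelDecidable _

lemma cube_coloring : ∀ c : Wc → Bool, (∀ a b, cubeGraph.Adj a b → c a ≠ c b) →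
    (∀ a, c a = parB a) ∨ (∀ a, c a = !parB a) := by decide

lemma cube_deg : ∀ a : Wc, (Finset.univ.filter (cubeGraph.Adj a)).card = 3 := by decide

def flipE : Wc ≃ Wc := Equiv.prodCongr (Equiv.refl (Fin 4)) (Equiv.addRight (1 : Fin 2))

lemma flip_adj : ∀ a b : Wc, cubeGraph.Adj a b → cubeGraph.Adj (flipE a) (flipE b) := by decide

lemma flip_par : ∀ a : Wc, parB (flipE a) = !parB a := by decide

lemma cube_class : ∀ a b : Wc, a ≠ b → parB a ≠ parB b →
    cubeGraph.Adj a b ∨ ∃ i : Fin 4, (a = (i, 0) ∧ b = (i + 2, 1)) ∨ (b = (i, 0) ∧ a = (i + 2, 1)) := by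
  decide
def tabData : List (List (List Nat)) := [
[[0, 1, 0, 6, 11, 0, 0, 0], [1, 0, 9, 0, 0, 4, 0, 0], [0, 9, 0, 5, 0, 0, 7, 0], [6, 0, 5, 0, 0, 0, 0, 3], [11, 0, 0, 0, 0, 12, 0, 8], [0, 4, 0, 0, 12, 0, 10, 0], [0, 0, 7, 0, 0, 10, 0, 2], [0, 0, 0, 3, 8, 0, 2, 0]],
[[0, 12, 0, 13, 2, 0, 11, 0], [12, 0, 7, 0, 0, 10, 0, 0], [0, 7, 0, 8, 0, 0, 6, 0], [13, 0, 8, 0, 0, 0, 0, 9], [2, 0, 0, 0, 0, 1, 0, 4], [0, 10, 0, 0, 1, 0, 5, 0], [11, 0, 6, 0, 0, 5, 0, 3], [0, 0, 0, 9, 4, 0, 3, 0]],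
[[0, 8, 0, 7, 1, 0, 0, 0], [8, 0, 9, 0, 0, 10, 0, 11], [0, 9, 0, 3, 0, 0, 13, 0], [7, 0, 3, 0, 0, 0, 0, 12], [1, 0, 0, 0, 0, 6, 0, 2], [0, 10, 0, 0, 6, 0, 5, 0], [0, 0, 13, 0, 0, 5, 0, 4], [0, 11, 0, 12, 2, 0, 4, 0]],
[[0, 13, 0, 12, 2, 0, 11, 0], [13, 0, 3, 0, 0, 10, 0, 9], [0, 3, 0, 7, 0, 0, 8, 0], [12, 0, 7, 0, 0, 0, 0, 4], [2, 0, 0, 0, 0, 6, 0, 14], [0, 10, 0, 0, 6, 0, 1, 0], [11, 0, 8, 0, 0, 1, 0, 5], [0, 9, 0, 4, 14, 0, 5, 0]],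
[[0, 1, 0, 12, 9, 0, 0, 0], [1, 0, 10, 0, 0, 7, 0, 0], [0, 10, 0, 13, 11, 0, 2, 0], [12, 0, 13, 0, 0, 0, 0, 3], [9, 0, 11, 0, 0, 4, 0, 6], [0, 7, 0, 0, 4, 0, 8, 0], [0, 0, 2, 0, 0, 8, 0, 5], [0, 0, 0, 3, 6, 0, 5, 0]],
[[0, 12, 0, 5, 8, 0, 6, 0], [12, 0, 11, 0, 0, 14, 0, 0], [0, 11, 0, 10, 2, 0, 1, 0], [5, 0, 10, 0, 0, 0, 0, 7], [8, 0, 2, 0, 0, 4, 0, 3], [0, 14, 0, 0, 4, 0, 13, 0], [6, 0, 1, 0, 0, 13, 0, 9], [0, 0, 0, 7, 3, 0, 9, 0]],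
[[0, 10, 0, 11, 8, 0, 0, 0], [10, 0, 14, 0, 0, 9, 0, 7], [0, 14, 0, 12, 6, 0, 1, 0], [11, 0, 12, 0, 0, 0, 0, 13], [8, 0, 6, 0, 0, 4, 0, 3], [0, 9, 0, 0, 4, 0, 2, 0], [0, 0, 1, 0, 0, 2, 0, 5], [0, 7, 0, 13, 3, 0, 5, 0]],
[[0, 15, 0, 2, 4, 0, 8, 0], [15, 0, 14, 0, 0, 9, 0, 12], [0, 14, 0, 11, 7, 0, 10, 0], [2, 0, 11, 0, 0, 0, 0, 13], [4, 0, 7, 0, 0, 5, 0, 3], [0, 9, 0, 0, 5, 0, 6, 0], [8, 0, 10, 0, 0, 6, 0, 1], [0, 12, 0, 13, 3, 0, 1, 0]],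
[[0, 2, 0, 5, 10, 0, 0, 0], [2, 0, 1, 0, 0, 8, 0, 0], [0, 1, 0, 13, 0, 0, 9, 0], [5, 0, 13, 0, 0, 12, 0, 6], [10, 0, 0, 0, 0, 3, 0, 11], [0, 8, 0, 12, 3, 0, 7, 0], [0, 0, 9, 0, 0, 7, 0, 4], [0, 0, 0, 6, 11, 0, 4, 0]],
[[0, 2, 0, 12, 3, 0, 11, 0], [2, 0, 5, 0, 0, 1, 0, 0], [0, 5, 0, 7, 0, 0, 4, 0], [12, 0, 7, 0, 0, 10, 0, 14], [3, 0, 0, 0, 0, 8, 0, 13], [0, 1, 0, 10, 8, 0, 6, 0], [11, 0, 4, 0, 0, 6, 0, 9], [0, 0, 0, 14, 13, 0, 9, 0]],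
[[0, 2, 0, 14, 6, 0, 0, 0], [2, 0, 12, 0, 0, 5, 0, 7], [0, 12, 0, 9, 0, 0, 8, 0], [14, 0, 9, 0, 0, 13, 0, 4], [6, 0, 0, 0, 0, 1, 0, 10], [0, 5, 0, 13, 1, 0, 11, 0], [0, 0, 8, 0, 0, 11, 0, 3], [0, 7, 0, 4, 10, 0, 3, 0]],
[[0, 3, 0, 4, 12, 0, 7, 0], [3, 0, 11, 0, 0, 13, 0, 8], [0, 11, 0, 14, 0, 0, 6, 0], [4, 0, 14, 0, 0, 1, 0, 9], [12, 0, 0, 0, 0, 15, 0, 10], [0, 13, 0, 1, 15, 0, 2, 0], [7, 0, 6, 0, 0, 2, 0, 5], [0, 8, 0, 9, 10, 0, 5, 0]],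
[[0, 14, 0, 4, 10, 0, 0, 0], [14, 0, 1, 0, 0, 3, 0, 0], [0, 1, 0, 9, 8, 0, 5, 0], [4, 0, 9, 0, 0, 7, 0, 11], [10, 0, 8, 0, 0, 2, 0, 6], [0, 3, 0, 7, 2, 0, 13, 0], [0, 0, 5, 0, 0, 13, 0, 12], [0, 0, 0, 11, 6, 0, 12, 0]],
[[0, 4, 0, 11, 14, 0, 10, 0], [4, 0, 1, 0, 0, 6, 0, 0], [0, 1, 0, 3, 7, 0, 2, 0], [11, 0, 3, 0, 0, 15, 0, 13], [14, 0, 7, 0, 0, 12, 0, 9], [0, 6, 0, 15, 12, 0, 5, 0], [10, 0, 2, 0, 0, 5, 0, 8], [0, 0, 0, 13, 9, 0, 8, 0]],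
[[0, 12, 0, 6, 11, 0, 0, 0], [12, 0, 10, 0, 0, 8, 0, 7], [0, 10, 0, 3, 13, 0, 9, 0], [6, 0, 3, 0, 0, 15, 0, 14], [11, 0, 13, 0, 0, 4, 0, 2], [0, 8, 0, 15, 4, 0, 5, 0], [0, 0, 9, 0, 0, 5, 0, 1], [0, 7, 0, 14, 2, 0, 1, 0]],
[[0, 1, 0, 3, 7, 0, 12, 0], [1, 0, 8, 0, 0, 10, 0, 9], [0, 8, 0, 6, 13, 0, 16, 0], [3, 0, 6, 0, 0, 4, 0, 2], [7, 0, 13, 0, 0, 5, 0, 14], [0, 10, 0, 4, 5, 0, 15, 0], [12, 0, 16, 0, 0, 15, 0, 11], [0, 9, 0, 2, 14, 0, 11, 0]]]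
def encW (a : Wc) : ℕ := a.1.val + 4 * a.2.val
def encD (d : Fin 4 → Bool) : ℕ :=
  (if d 0 then 1 else 0) + (if d 1 then 2 else 0) + (if d 2 then 4 else 0) + (if d 3 then 8 else 0)
def tab (k : ℕ) (a b : Wc) : ℕ := (((tabData.getD k []).getD (encW a) []).getD (encW b) 0)
lemma tab_symm : ∀ d : Fin 4 → Bool, ∀ a b : Wc, tab (encD d) a b = tab (encD d) b a := by decide
def glab (d : Fin 4 → Bool) : Sym2 Wc → ℕ := Sym2.lift ⟨tab (encD d), tab_symm d⟩

lemma check1 : ∀ d : Fin 4 → Bool, ∀ x ∈ (Hd d).edgeFinset,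
    glab d x ∈ Finset.Icc 1 (Hd d).edgeFinset.card := by decide
lemma check2 : ∀ d : Fin 4 → Bool, ∀ x ∈ (Hd d).edgeFinset, ∀ y ∈ (Hd d).edgeFinset,
    glab d x = glab d y → x = y := by decide
lemma check3 : ∀ d : Fin 4 → Bool, ∀ y ∈ Finset.Icc 1 (Hd d).edgeFinset.card,
    ∃ x ∈ (Hd d).edgeFinset, glab d x = y := by decide
lemma check4 : ∀ d : Fin 4 → Bool, ∀ u v : Wc, (Hd d).Adj u v →
    fplus (Hd d) (glab d) u ≠ fplus (Hd d) (glab d) v := by decide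

lemma Hd_lal (d : Fin 4 → Bool) : IsLocalAntimagic (Hd d) (glab d) := by
  refine ⟨⟨?_, ?_, ?_⟩, check4 d⟩
  · intro z hz
    rw [Finset.mem_coe] at hz ⊢
    exact check1 d z hz
  · intro z hz w hw h
    exact check2 d z (Finset.mem_coe.1 hz) w (Finset.mem_coe.1 hw) h
  · intro y hy
    obtain ⟨x, hx, hxy⟩ := check3 d y (Finset.mem_coe.1 hy)
    exact ⟨x, Finset.mem_coe.2 hx, hxy⟩

section Transport
variable {W : Type*} [Fintype W] [DecidableEq W]
  (H : SimpleGraph W) [DecidableRel H.Adj] (G : SimpleGraph V) [DecidableRel G.Adj]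
  (e : W ≃ V)

lemma map_symm_map (z : Sym2 W) : Sym2.map (⇑e.symm) (Sym2.map (⇑e) z) = z := by
  rw [Sym2.map_map]
  have : (⇑e.symm ∘ ⇑e) = id := by funext x; simp
  rw [this, Sym2.map_id, id_eq]

lemma map_map_symm (z : Sym2 V) : Sym2.map (⇑e) (Sym2.map (⇑e.symm) z) = z := by
  rw [Sym2.map_map]
  have : (⇑e ∘ ⇑e.symm) = id := by funext x; simp
  rw [this, Sym2.map_id, id_eq]

variable (hiso : ∀ a b, H.Adj a b ↔ G.Adj (e a) (e b))
include hiso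

lemma mem_transport : ∀ z : Sym2 W, z ∈ H.edgeFinset ↔ Sym2.map (⇑e) z ∈ G.edgeFinset := by
  intro z
  induction z using Sym2.ind with
  | _ a b =>
    rw [Sym2.map_pair_eq, SimpleGraph.mem_edgeFinset, SimpleGraph.mem_edgeFinset,
      SimpleGraph.mem_edgeSet, SimpleGraph.mem_edgeSet]
    exact hiso a b

lemma edgeFinset_transport : G.edgeFinset = H.edgeFinset.image (Sym2.map ⇑e) := by
  ext z
  constructor
  · intro hz
    refine Finset.mem_image.2 ⟨Sym2.map (⇑e.symm) z, ?_, map_map_symm e z⟩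
    rw [mem_transport H G e hiso, map_map_symm]; exact hz
  · intro hz
    obtain ⟨w, hw, rfl⟩ := Finset.mem_image.1 hz
    exact (mem_transport H G e hiso w).1 hw

lemma card_transport : G.edgeFinset.card = H.edgeFinset.card := by
  rw [edgeFinset_transport H G e hiso,
    Finset.card_image_of_injective _ (Sym2.map.injective e.injective)]

lemma fplus_transport (g : Sym2 W → ℕ) (v : V) :
    fplus G (g ∘ Sym2.map ⇑e.symm) v = fplus H g (e.symm v) := by
  unfold fplus
  refine Finset.sum_nbij' (Sym2.map ⇑e.symm) (Sym2.map ⇑e) ?_ ?_ ?_ ?_ ?_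
  · intro z hz
    rw [Finset.mem_filter] at hz ⊢
    refine ⟨?_, ?_⟩
    · rw [mem_transport H G e hiso, map_map_symm]; exact hz.1
    · exact Sym2.mem_map.2 ⟨v, hz.2, rfl⟩
  · intro z hz
    rw [Finset.mem_filter] at hz ⊢
    refine ⟨(mem_transport H G e hiso z).1 hz.1, ?_⟩
    exact Sym2.mem_map.2 ⟨e.symm v, hz.2, by simp⟩
  · intro z _; exact map_map_symm e z
  · intro z _; exact map_symm_map e z
  · intro z _; rfl

lemma transport (g : Sym2 W → ℕ) (hg : IsLocalAntimagic H g) :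
    IsLocalAntimagic G (g ∘ Sym2.map ⇑e.symm) := by
  constructor
  · have hbij : Set.BijOn (Sym2.map ⇑e.symm) ↑G.edgeFinset ↑H.edgeFinset := by
      refine ⟨?_, ?_, ?_⟩
      · intro z hz
        rw [Finset.mem_coe] at hz ⊢
        rw [mem_transport H G e hiso, map_map_symm]; exact hz
      · intro z _ w _ hzw
        have := congrArg (Sym2.map (⇑e)) hzw
        rwa [map_map_symm, map_map_symm] at this
      · intro w hw
        rw [Finset.mem_coe] at hw
        exact ⟨Sym2.map (⇑e) w, by
          rw [Finset.mem_coe, ← mem_transport H G e hiso]; exact hw,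
          map_symm_map e w⟩
    have h2 := Set.BijOn.comp hg.1 hbij
    rwa [card_transport H G e hiso]
  · intro u v huv
    have h' : H.Adj (e.symm u) (e.symm v) := by
      rw [hiso]; simpa using huv
    have h2 := hg.2 h'
    rw [fplus_transport H G e hiso g u, fplus_transport H G e hiso g v]
    exact h2
end Transport

lemma deg_ge (G : SimpleGraph V) [DecidableRel G.Adj] (X Y : Finset V)
    (hX : X.card = 4) (hdisj : Disjoint X Y)
    (hbip : ∀ ⦃u v : V⦄, G.Adj u v → (u ∈ X ∧ v ∈ Y) ∨ (u ∈ Y ∧ v ∈ X))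
    (e : Wc ≃ V) (hsp : ∀ a b, cubeGraph.Adj a b → G.Adj (e a) (e b)) :
    ∀ v ∈ Y, (X.filter (fun u => ¬ G.Adj u v)).card ≤ 1 := by
  intro v hv
  have hsplit := Finset.card_filter_add_card_filter_not
    (s := X) (p := fun u => G.Adj u v)
  have himg : (Finset.univ.filter (cubeGraph.Adj (e.symm v))).image (⇑e)
      ⊆ X.filter (fun u => G.Adj u v) := by
    intro u hu
    obtain ⟨b, hb, rfl⟩ := Finset.mem_image.1 hu
    have hb' : cubeGraph.Adj (e.symm v) b := (Finset.mem_filter.1 hb).2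
    have hadj : G.Adj v (e b) := by
      have := hsp _ _ hb'
      rwa [Equiv.apply_symm_apply] at this
    rcases hbip hadj with ⟨h1, _⟩ | ⟨_, h2⟩
    · exact absurd h1 (Finset.disjoint_right.1 hdisj hv)
    · exact Finset.mem_filter.2 ⟨h2, hadj.symm⟩
  have hcard3 : 3 ≤ (X.filter (fun u => G.Adj u v)).card := by
    have := Finset.card_le_card himg
    rwa [Finset.card_image_of_injective _ e.injective, cube_deg] at this
  omega

lemma exists_la (G : SimpleGraph V) [DecidableRel G.Adj] (X Y : Finset V)
    (hdisj : Disjoint X Y)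
    (hbip : ∀ ⦃u v : V⦄, G.Adj u v → (u ∈ X ∧ v ∈ Y) ∨ (u ∈ Y ∧ v ∈ X))
    (e : Wc ≃ V) (hsp : ∀ a b, cubeGraph.Adj a b → G.Adj (e a) (e b))
    (hpar : ∀ a : Wc, e a ∈ X ↔ parB a = true) :
    ∃ f : Sym2 V → ℕ, IsLocalAntimagic G f := by
  set d : Fin 4 → Bool := fun i => decide (G.Adj (e (i, 0)) (e (i + 2, 1))) with hd
  have hdiag : ∀ a b, diagRel d a b → G.Adj (e a) (e b) := by
    rintro a b ⟨i, hdi, rfl, rfl⟩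
    exact of_decide_eq_true hdi
  have hiso : ∀ a b, (Hd d).Adj a b ↔ G.Adj (e a) (e b) := by
    intro a b
    constructor
    · intro h
      rw [Hd, SimpleGraph.fromRel_adj] at h
      obtain ⟨hne, h | h⟩ := h
      · rcases h with hc | hdg
        · exact hsp a b ((SimpleGraph.fromRel_adj _ a b).2 ⟨hne, Or.inl hc⟩)
        · exact hdiag a b hdg
      · rcases h with hc | hdg
        · exact hsp a b ((SimpleGraph.fromRel_adj _ a b).2 ⟨hne, Or.inr hc⟩)
        · exact (hdiag b a hdg).symm
    · intro h
      have hne : a ≠ b := fun hh => G.irrefl (hh ▸ h)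
      have hpab : parB a ≠ parB b := by
        rcases hbip h with ⟨h1, h2⟩ | ⟨h1, h2⟩
        · have p1 : parB a = true := (hpar a).1 h1
          have p2 : ¬ parB b = true := fun hb =>
            Finset.disjoint_left.1 hdisj ((hpar b).2 hb) h2
          simp [p1, Bool.not_eq_true] at p2 ⊢
          simp [p2]
        · have p2 : parB b = true := (hpar b).1 h2
          have p1 : ¬ parB a = true := fun hb =>
            Finset.disjoint_left.1 hdisj ((hpar a).2 hb) h1
          simp [p2, Bool.not_eq_true] at p1 ⊢
          simp [p1]
      rcases cube_class a b hne hpab with hc | ⟨i, ⟨rfl, rfl⟩ | ⟨rfl, rfl⟩⟩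
      · rw [cubeGraph, SimpleGraph.fromRel_adj] at hc
        rw [Hd, SimpleGraph.fromRel_adj]
        rcases hc.2 with hr | hr
        · exact ⟨hne, Or.inl (Or.inl hr)⟩
        · exact ⟨hne, Or.inr (Or.inl hr)⟩
      · rw [Hd, SimpleGraph.fromRel_adj]
        exact ⟨hne, Or.inl (Or.inr ⟨i, decide_eq_true h, rfl, rfl⟩)⟩
      · rw [Hd, SimpleGraph.fromRel_adj]
        exact ⟨hne, Or.inr (Or.inr ⟨i, decide_eq_true h.symm, rfl, rfl⟩)⟩
  exact ⟨glab d ∘ Sym2.map ⇑e.symm, transport (Hd d) G e hiso (glab d) (Hd_lal d)⟩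

lemma exists_la' (G : SimpleGraph V) [DecidableRel G.Adj] (X Y : Finset V)
    (hdisj : Disjoint X Y)
    (hbip : ∀ ⦃u v : V⦄, G.Adj u v → (u ∈ X ∧ v ∈ Y) ∨ (u ∈ Y ∧ v ∈ X))
    (e : Wc ≃ V) (hsp : ∀ a b, cubeGraph.Adj a b → G.Adj (e a) (e b)) :
    ∃ f : Sym2 V → ℕ, IsLocalAntimagic G f := by
  have hcol := cube_coloring (fun x => decide (e x ∈ X))
  have hproper : ∀ a b, cubeGraph.Adj a b →
      (fun x => decide (e x ∈ X)) a ≠ (fun x => decide (e x ∈ X)) b := by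
    intro a b hab
    simp only [ne_eq, decide_eq_decide]
    intro hiff
    rcases hbip (hsp a b hab) with ⟨h1, h2⟩ | ⟨h1, h2⟩
    · exact Finset.disjoint_left.1 hdisj (hiff.1 h1) h2
    · exact Finset.disjoint_left.1 hdisj (hiff.2 h2) h1
  rcases hcol hproper with hp | hp
  · refine exists_la G X Y hdisj hbip e hsp ?_
    intro a
    constructor
    · intro h; rw [← hp a]; exact decide_eq_true h
    · intro h; exact of_decide_eq_true ((hp a) ▸ h)
  · refine exists_la G X Y hdisj hbip (flipE.trans e) (fun a b hab => hsp _ _ (flip_adj a b hab)) ?_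
    intro a
    have h1 : decide (e (flipE a) ∈ X) = !parB (flipE a) := hp (flipE a)
    rw [flip_par, Bool.not_not] at h1
    constructor
    · intro h
      rw [← h1]
      exact decide_eq_true h
    · intro h; exact of_decide_eq_true (h1 ▸ h)

theorem chiLA_ge_four_of_cube_spanning (G : SimpleGraph V) [DecidableRel G.Adj]
    (X Y : Finset V) (hX : X.card = 4) (hY : Y.card = 4) (hdisj : Disjoint X Y)
    (hcover : X ∪ Y = Finset.univ)
    (hbip : ∀ ⦃u v : V⦄, G.Adj u v → (u ∈ X ∧ v ∈ Y) ∨ (u ∈ Y ∧ v ∈ X))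
    (hspan : ∃ e : (Fin 4 × Fin 2) ≃ V, ∀ a b, cubeGraph.Adj a b → G.Adj (e a) (e b))
    (hq1 : 12 ≤ G.edgeFinset.card) (hq2 : G.edgeFinset.card ≤ 14) :
    4 ≤ chiLA G := by
  obtain ⟨e0, hsp0⟩ := hspan
  obtain ⟨f0, hf0⟩ := exists_la' G X Y hdisj hbip e0 hsp0
  have hne : {t | ∃ f : Sym2 V → ℕ, IsLocalAntimagic G f ∧ colorCount G f = t}.Nonempty :=
    ⟨colorCount G f0, f0, hf0, rfl⟩
  have hmem := Nat.sInf_mem hne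
  simp only [Set.mem_setOf_eq] at hmem
  obtain ⟨f, hf, hcc⟩ := hmem
  rw [chiLA, ← hcc]
  exact lower_bound G X Y hX hY hdisj hcover hbip
    (deg_ge G X Y hX hdisj hbip e0 hsp0)
    (deg_ge G Y X hY hdisj.symm (fun u v h => (hbip h).symm) e0 hsp0)
    hq1 hq2 f hf
end

section
/- Let G be an r-regular graph of order p with r ≥ 2 and χ_la(G) = χ(G) = χ. Define G₁ = G and G_k = G_{k−1} ∨ G_{k−1} for k ≥ 2. Then G_k is an (r + (2^{k−1} − 1)p)-regular graph of order 2^{k−1}p with χ_la(G_k) = χ(G_k) = 2^{k−1}χ. -/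
open Finset

variable {V : Type*} [Fintype V] [DecidableEq V]

/-- Adjacency relation of the join of two graphs. -/
def joinAdj {α β : Type*} (G : SimpleGraph α) (H : SimpleGraph β) :
    α ⊕ β → α ⊕ β → Prop
  | Sum.inl a, Sum.inl b => G.Adj a b
  | Sum.inr a, Sum.inr b => H.Adj a b
  | Sum.inl _, Sum.inr _ => True
  | Sum.inr _, Sum.inl _ => True

/-- The join `G ∨ H` of two vertex-disjoint graphs: keep all edges of `G` and `H`,
and add all edges between `V(G)` and `V(H)`. -/
def joinG {α β : Type*} (G : SimpleGraph α) (H : SimpleGraph β) : SimpleGraph (α ⊕ β) where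
  Adj := joinAdj G H
  symm := by
    constructor
    rintro (a | a) (b | b) h <;> simp only [joinAdj] at h ⊢
    · exact h.symm
    · exact h.symm
  loopless := by
    constructor
    rintro (a | a) h <;> simp only [joinAdj] at h
    · exact G.loopless.irrefl a h
    · exact H.loopless.irrefl a h

instance joinGDecidableAdj {α β : Type*} (G : SimpleGraph α) (H : SimpleGraph β)
    [DecidableRel G.Adj] [DecidableRel H.Adj] : DecidableRel (joinG G H).Adj
  | Sum.inl a, Sum.inl b => inferInstanceAs (Decidable (G.Adj a b))
  | Sum.inr a, Sum.inr b => inferInstanceAs (Decidable (H.Adj a b))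
  | Sum.inl _, Sum.inr _ => inferInstanceAs (Decidable True)
  | Sum.inr _, Sum.inl _ => inferInstanceAs (Decidable True)

/-- The vertex type of the `k`-fold iterated self-join. -/
def iterV (α : Type*) : ℕ → Type _
  | 0 => α
  | k + 1 => iterV α k ⊕ iterV α k

instance iterVFintype (α : Type*) [Fintype α] : ∀ k, Fintype (iterV α k)
  | 0 => inferInstanceAs (Fintype α)
  | k + 1 => letI := iterVFintype α k; inferInstanceAs (Fintype (iterV α k ⊕ iterV α k))

instance iterVDecEq (α : Type*) [DecidableEq α] : ∀ k, DecidableEq (iterV α k)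
  | 0 => inferInstanceAs (DecidableEq α)
  | k + 1 => letI := iterVDecEq α k; inferInstanceAs (DecidableEq (iterV α k ⊕ iterV α k))

/-- The iterated self-join: `iterJoin G 0 = G` and `iterJoin G (k+1) = iterJoin G k ∨ iterJoin G k`,
so that `iterJoin G (k-1)` is the graph `G_k` of the paper (`G₁ = G`, `G_k = G_{k-1} ∨ G_{k-1}`). -/
def iterJoin {α : Type*} (G : SimpleGraph α) : ∀ k, SimpleGraph (iterV α k)
  | 0 => G
  | k + 1 => joinG (iterJoin G k) (iterJoin G k)

instance iterJoinDecidableAdj {α : Type*} (G : SimpleGraph α) [DecidableRel G.Adj] :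
    ∀ k, DecidableRel (iterJoin G k).Adj
  | 0 => inferInstanceAs (DecidableRel G.Adj)
  | k + 1 => letI := iterJoinDecidableAdj G k
      inferInstanceAs (DecidableRel (joinG (iterJoin G k) (iterJoin G k)).Adj)

/-!
Given a local antimagic labeling `f` of an `s`-regular graph `H` of order `p` with `q` edges and
`c` colors, label `H ∨ H` by `f` on the first copy, by `f + q` on the second copy, and by
`2q + 1 + M a b` on the cross edge `ab`, where `M` is a semi-magic square of order `p` with entries
`0, …, p² - 1`. Since the rows and columns of `M` have a common sum, every color of the first copy
is shifted by the same constant, and every color of the second copy by that constant plus `qs`.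
Thus the copies receive disjoint sets of `c` colors each, giving `2c` colors, which is optimal
because `χ(H ∨ H) = 2χ(H)`. Iterating yields the theorem.

Semi-magic squares exist for every order except 1 and 2: odd orders come from the orthogonal
Latin squares `i + j` and `i + 2j` over `ZMod n`, order 4 from Dürer's square, and order `2m`
from order `m` by replacing each entry with a 2×2 block.
-/

theorem Nat.eq_and_eq_of_mul_add_eq {n a b a' b' : ℕ} (hb : b < n) (hb' : b' < n)
    (h : n * a + b = n * a' + b') : a = a' ∧ b = b' := by
  have hn : 0 < n := by omega
  have ha : a = a' := by
    simpa [Nat.mul_add_div hn, Nat.div_eq_of_lt hb, Nat.div_eq_of_lt hb'] using congrArg (· / n) h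
  subst ha
  exact ⟨rfl, by omega⟩

lemma ZMod.sum_comp_val {n : ℕ} [NeZero n] (g : ℕ → ℕ) :
    ∑ x : ZMod n, g x.val = ∑ d ∈ range n, g d :=
  sum_nbij ZMod.val (fun x _ => mem_range.mpr x.val_lt) (ZMod.val_injective n).injOn
    (fun d hd => ⟨d, mem_coe.mpr (mem_univ _), ZMod.val_natCast_of_lt (mem_range.mp hd)⟩)
    fun _ _ => rfl

lemma ZMod.sum_comp_val_add_mul {n : ℕ} [NeZero n] (g : ℕ → ℕ) (c : ZMod n) {a : ZMod n}
    (ha : IsUnit a) : ∑ x : ZMod n, g (c + a * x).val = ∑ d ∈ range n, g d :=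
  (Fintype.sum_bijective _ ((Equiv.addLeft c).bijective.comp ha.unit.mulLeft_bijective) _ _
    fun _ => rfl).trans (ZMod.sum_comp_val g)

lemma ZMod.sum_comp_val_add {n : ℕ} [NeZero n] (g : ℕ → ℕ) (c : ZMod n) :
    ∑ x : ZMod n, g (c + x).val = ∑ d ∈ range n, g d := by
  simpa using ZMod.sum_comp_val_add_mul g c isUnit_one

/-- The 2×2 block put on the `d`-th broken diagonal when doubling a square of order `m`.
The blocks alternate between two with row sums `3, 3` and column sums `2, 4` and `4, 2`; for odd
`m` the last three are replaced by a triple whose row and column sums all total `9`. -/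
def blockPattern : ℕ → ℕ → Fin 2 → Fin 2 → ℕ
  | 3, 0 => ![![0, 1], ![2, 3]]
  | 3, 1 => ![![3, 2], ![0, 1]]
  | _ + 2, 0 => ![![0, 3], ![2, 1]]
  | _ + 2, 1 => ![![3, 0], ![1, 2]]
  | m + 2, d + 2 => blockPattern m d
  | _, _ => ![![3, 0], ![1, 2]]

lemma injective_uncurry_blockPattern (m d : ℕ) :
    Function.Injective (Function.uncurry (blockPattern m d)) := by
  fun_induction blockPattern m d <;> first | assumption | decide

lemma blockPattern_lt (m d : ℕ) (s t : Fin 2) : blockPattern m d s t < 4 := by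
  fun_induction blockPattern m d <;> first | assumption | (revert s t; decide)

theorem sum_blockPattern (φ : (Fin 2 → Fin 2 → ℕ) → ℕ)
    (h₂ : φ ![![0, 3], ![2, 1]] + φ ![![3, 0], ![1, 2]] = 6)
    (h₃ : φ ![![0, 1], ![2, 3]] + φ ![![3, 2], ![0, 1]] + φ ![![3, 0], ![1, 2]] = 9) :
    ∀ m, m ≠ 1 → ∑ d ∈ range m, φ (blockPattern m d) = 3 * m
  | 0, _ => rfl
  | m + 2, _ => by
    obtain rfl | hm := eq_or_ne m 1
    · simpa [sum_range_succ, blockPattern] using h₃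
    · simp only [sum_range_succ', zero_add, blockPattern, sum_blockPattern φ h₂ h₃ m hm]
      omega

structure SemiMagicSquare (ι : Type*) [Fintype ι] where
  entry : ι → ι → ℕ
  injective_uncurry : Function.Injective (Function.uncurry entry)
  entry_lt (i j : ι) : entry i j < Fintype.card ι * Fintype.card ι
  magicSum : ℕ
  sum_row (i : ι) : ∑ j, entry i j = magicSum
  sum_col (j : ι) : ∑ i, entry i j = magicSum

namespace SemiMagicSquare

variable {ι κ : Type*} [Fintype ι] [Fintype κ]

lemma surjOn (M : SemiMagicSquare ι) :
    Set.SurjOn (Function.uncurry M.entry) Set.univ (range (Fintype.card ι * Fintype.card ι)) := by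
  simpa using surjOn_of_injOn_of_card_le (s := univ) _
    (fun x _ => mem_range.mpr (M.entry_lt x.1 x.2)) M.injective_uncurry.injOn (by simp)

def reindex (e : ι ≃ κ) (M : SemiMagicSquare ι) : SemiMagicSquare κ where
  entry a b := M.entry (e.symm a) (e.symm b)
  injective_uncurry := M.injective_uncurry.comp (e.symm.prodCongr e.symm).injective
  entry_lt a b := Fintype.card_congr e ▸ M.entry_lt _ _
  magicSum := M.magicSum
  sum_row a := by rw [e.symm.sum_comp (M.entry (e.symm a)), M.sum_row]
  sum_col b := by rw [e.symm.sum_comp (fun i => M.entry i (e.symm b)), M.sum_col]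

def ofIsEmpty [IsEmpty ι] : SemiMagicSquare ι where
  entry _ _ := 0
  injective_uncurry x := isEmptyElim x.1
  entry_lt i := isEmptyElim i
  magicSum := 0
  sum_row _ := by simp
  sum_col _ := by simp

def ofOdd (n : ℕ) [NeZero n] (hn : Odd n) : SemiMagicSquare (ZMod n) where
  entry i j := n * (i + j).val + (i + 2 * j).val
  injective_uncurry := by
    rintro ⟨i, j⟩ ⟨i', j'⟩ h
    obtain ⟨h₁, h₂⟩ := Nat.eq_and_eq_of_mul_add_eq (ZMod.val_lt _) (ZMod.val_lt _) h
    replace h₁ := ZMod.val_injective n h₁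
    replace h₂ := ZMod.val_injective n h₂
    have hj : j = j' := by linear_combination h₂ - h₁
    subst hj
    simpa using h₁
  entry_lt i j := by
    simpa [ZMod.card] using Nat.mul_add_lt_mul_of_lt_of_lt (i + j).val_lt (i + 2 * j).val_lt
  magicSum := (n + 1) * ∑ d ∈ range n, d
  sum_row i := by
    have h2 : IsUnit (2 : ZMod n) := by
      simpa using (ZMod.isUnit_iff_coprime 2 n).mpr (Nat.coprime_two_left.mpr hn)
    rw [sum_add_distrib, ← mul_sum, ZMod.sum_comp_val_add_mul (fun x => x) i h2,
      ZMod.sum_comp_val_add (fun x => x) i]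
    ring
  sum_col j := by
    simp_rw [add_comm _ j, add_comm _ (2 * j)]
    rw [sum_add_distrib, ← mul_sum, ZMod.sum_comp_val_add (fun x => x) j,
      ZMod.sum_comp_val_add (fun x => x) (2 * j)]
    ring

/-- Dürer's *Melencolia I* square with every entry lowered by one. -/
def durer : SemiMagicSquare (Fin 4) where
  entry := ![![15, 2, 1, 12], ![4, 9, 10, 7], ![8, 5, 6, 11], ![3, 14, 13, 0]]
  injective_uncurry := by decide
  entry_lt := by simp only [Fintype.card_fin]; decide
  magicSum := 30
  sum_row := by decide
  sum_col := by decide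

def double {m : ℕ} [NeZero m] (hm : m ≠ 1) (M : SemiMagicSquare (ZMod m)) :
    SemiMagicSquare (ZMod m × Fin 2) where
  entry x y := 4 * M.entry x.1 y.1 + blockPattern m (x.1 + y.1).val x.2 y.2
  injective_uncurry := by
    rintro ⟨⟨I, s⟩, ⟨J, t⟩⟩ ⟨⟨I', s'⟩, ⟨J', t'⟩⟩ h
    obtain ⟨hM, hB⟩ := Nat.eq_and_eq_of_mul_add_eq (blockPattern_lt _ _ s t)
      (blockPattern_lt _ _ s' t') h
    obtain ⟨rfl, rfl⟩ := Prod.ext_iff.mp (M.injective_uncurry (a₁ := (I, J)) (a₂ := (I', J')) hM)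
    obtain ⟨rfl, rfl⟩ := Prod.ext_iff.mp
      (injective_uncurry_blockPattern _ _ (a₁ := (s, t)) (a₂ := (s', t')) hB)
    rfl
  entry_lt x y := by
    have := Nat.mul_add_lt_mul_of_lt_of_lt (M.entry_lt x.1 y.1)
      (blockPattern_lt m (x.1 + y.1).val x.2 y.2)
    simp only [Fintype.card_prod, ZMod.card, Fintype.card_fin] at this ⊢
    linarith
  magicSum := 8 * M.magicSum + 3 * m
  sum_row := by
    rintro ⟨I, s⟩
    set φ : ℕ → ℕ := fun d => blockPattern m d s 0 + blockPattern m d s 1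
    have hφ : ∑ d ∈ range m, φ d = 3 * m :=
      sum_blockPattern (fun P => P s 0 + P s 1) (by fin_cases s <;> rfl)
        (by fin_cases s <;> rfl) m hm
    calc ∑ y : ZMod m × Fin 2, (4 * M.entry I y.1 + blockPattern m (I + y.1).val s y.2)
        = ∑ J, (8 * M.entry I J + φ (I + J).val) := by
          simp only [Fintype.sum_prod_type, Fin.sum_univ_two]
          exact sum_congr rfl fun _ _ => by ring
      _ = 8 * M.magicSum + 3 * m := by
          rw [sum_add_distrib, ← mul_sum, M.sum_row, ZMod.sum_comp_val_add (g := φ), hφ]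
  sum_col := by
    rintro ⟨J, t⟩
    set ψ : ℕ → ℕ := fun d => blockPattern m d 0 t + blockPattern m d 1 t
    have hψ : ∑ d ∈ range m, ψ d = 3 * m :=
      sum_blockPattern (fun P => P 0 t + P 1 t) (by fin_cases t <;> rfl)
        (by fin_cases t <;> rfl) m hm
    calc ∑ x : ZMod m × Fin 2, (4 * M.entry x.1 J + blockPattern m (x.1 + J).val x.2 t)
        = ∑ I, (8 * M.entry I J + ψ (J + I).val) := by
          simp only [Fintype.sum_prod_type, Fin.sum_univ_two, add_comm _ J]
          exact sum_congr rfl fun _ _ => by ring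
      _ = 8 * M.magicSum + 3 * m := by
          rw [sum_add_distrib, ← mul_sum, M.sum_col, ZMod.sum_comp_val_add (g := ψ), hψ]

theorem nonempty_fin (n : ℕ) (h₁ : n ≠ 1) (h₂ : n ≠ 2) : Nonempty (SemiMagicSquare (Fin n)) := by
  induction n using Nat.strong_induction_on with
  | _ n ih =>
  have transfer {κ : Type} [Fintype κ] (hκ : Fintype.card κ = n) (M : SemiMagicSquare κ) :
      Nonempty (SemiMagicSquare (Fin n)) :=
    ⟨M.reindex (Fintype.equivFinOfCardEq hκ)⟩
  obtain ⟨m, rfl | rfl⟩ := Nat.even_or_odd' n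
  · obtain rfl | rfl | rfl | hm := (by omega : m = 0 ∨ m = 1 ∨ m = 2 ∨ 3 ≤ m)
    · exact ⟨ofIsEmpty (ι := Fin 0)⟩
    · omega
    · exact ⟨durer⟩
    · have : NeZero m := ⟨by omega⟩
      obtain ⟨M⟩ := ih m (by omega) (by omega) (by omega)
      exact transfer (by simp [ZMod.card, mul_comm])
        ((M.reindex (ZMod.finEquiv m).toEquiv).double (by omega))
  · exact transfer (ZMod.card _) (ofOdd (2 * m + 1) (odd_two_mul_add_one m))

theorem nonempty (h₁ : Fintype.card ι ≠ 1) (h₂ : Fintype.card ι ≠ 2) :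
    Nonempty (SemiMagicSquare ι) :=
  have ⟨M⟩ := nonempty_fin _ h₁ h₂
  ⟨M.reindex (Fintype.equivFin ι).symm⟩

end SemiMagicSquare

open Sum

section Join

variable {α β : Type*} (G : SimpleGraph α) (H : SimpleGraph β)

@[simp] lemma joinG_adj_inl_inl {a a' : α} : (joinG G H).Adj (inl a) (inl a') ↔ G.Adj a a' :=
  Iff.rfl

@[simp] lemma joinG_adj_inr_inr {b b' : β} : (joinG G H).Adj (inr b) (inr b') ↔ H.Adj b b' :=
  Iff.rfl

@[simp] lemma joinG_adj_inl_inr (a : α) (b : β) : (joinG G H).Adj (inl a) (inr b) := trivial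

@[simp] lemma joinG_adj_inr_inl (a : α) (b : β) : (joinG G H).Adj (inr b) (inl a) := trivial

lemma SimpleGraph.degree_eq_sum_ite {W : Type*} [Fintype W] (G : SimpleGraph W) [DecidableRel G.Adj]
    (v : W) : G.degree v = ∑ w, if G.Adj v w then 1 else 0 := by
  rw [← G.card_neighborFinset_eq_degree, G.neighborFinset_eq_filter, card_filter]

lemma SimpleGraph.colorable_card_image {W C : Type*} [Fintype W] [DecidableEq C]
    (G : SimpleGraph W) (c : W → C) (hc : ∀ ⦃u v⦄, G.Adj u v → c u ≠ c v) :
    G.Colorable #(univ.image c) := by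
  simpa using (Coloring.mk (fun v => (⟨c v, mem_image_of_mem c (mem_univ v)⟩ : univ.image c))
    fun h e => hc h (congrArg Subtype.val e)).colorable

lemma chromaticNumber_joinG [Fintype α] [Fintype β] {a b : ℕ} (hG : G.chromaticNumber = a)
    (hH : H.chromaticNumber = b) : (joinG G H).chromaticNumber = (a + b : ℕ) := by
  classical
  obtain ⟨C⟩ := SimpleGraph.chromaticNumber_le_iff_colorable.mp hG.le
  obtain ⟨D⟩ := SimpleGraph.chromaticNumber_le_iff_colorable.mp hH.le
  apply le_antisymm
  · let E : (joinG G H).Coloring (Fin a ⊕ Fin b) := .mk (Sum.map C D) <| by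
      rintro (x | x) (y | y) h
      exacts [by simpa using C.valid h, by simp, by simp, by simpa using D.valid h]
    simpa using E.colorable.chromaticNumber_le
  · refine SimpleGraph.le_chromaticNumber_iff_coloring.mpr fun m E => ?_
    set L := univ.image (E ∘ inl)
    set R := univ.image (E ∘ inr)
    have hL : a ≤ #L := by
      have := (G.colorable_card_image (E ∘ inl) fun _ _ h => E.valid h).chromaticNumber_le
      exact_mod_cast hG ▸ this
    have hR : b ≤ #R := by
      have := (H.colorable_card_image (E ∘ inr) fun _ _ h => E.valid h).chromaticNumber_le
      exact_mod_cast hH ▸ this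
    have hLR : Disjoint L R := by
      simp only [L, R, disjoint_left, mem_image, mem_univ, true_and, Function.comp_apply]
      rintro _ ⟨x, rfl⟩ ⟨y, hy⟩
      exact E.valid (joinG_adj_inl_inr G H x y) hy.symm
    calc a + b ≤ #(L ∪ R) := card_union_of_disjoint hLR ▸ add_le_add hL hR
      _ ≤ m := by simpa using card_le_univ (L ∪ R)

variable [Fintype α] [Fintype β] [DecidableRel G.Adj] [DecidableRel H.Adj]

lemma degree_joinG_inl (a : α) : (joinG G H).degree (inl a) = G.degree a + Fintype.card β := by
  rw [SimpleGraph.degree_eq_sum_ite, Fintype.sum_sum_type, G.degree_eq_sum_ite]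
  simp only [joinG_adj_inl_inl, joinG_adj_inl_inr, if_true, sum_const, card_univ, smul_eq_mul,
    mul_one]

lemma degree_joinG_inr (b : β) : (joinG G H).degree (inr b) = H.degree b + Fintype.card α := by
  rw [SimpleGraph.degree_eq_sum_ite, Fintype.sum_sum_type, H.degree_eq_sum_ite, add_comm]
  simp only [joinG_adj_inr_inr, joinG_adj_inr_inl, if_true, sum_const, card_univ, smul_eq_mul,
    mul_one]

lemma card_edgeFinset_joinG [DecidableEq α] [DecidableEq β] :
    #(joinG G H).edgeFinset =
      #G.edgeFinset + #H.edgeFinset + Fintype.card α * Fintype.card β := by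
  have := (joinG G H).sum_degrees_eq_twice_card_edges
  rw [Fintype.sum_sum_type] at this
  simp only [degree_joinG_inl, degree_joinG_inr, sum_add_distrib, G.sum_degrees_eq_twice_card_edges,
    H.sum_degrees_eq_twice_card_edges, sum_const, card_univ, smul_eq_mul] at this
  linarith [mul_comm (Fintype.card α) (Fintype.card β)]

lemma SimpleGraph.IsRegularOfDegree.joinG_self {G : SimpleGraph α} [DecidableRel G.Adj] {s : ℕ}
    (h : G.IsRegularOfDegree s) : (joinG G G).IsRegularOfDegree (s + Fintype.card α) := by
  rintro (a | a)
  · rw [degree_joinG_inl, h a]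
  · rw [degree_joinG_inr, h a]

end Join

lemma card_image_add_const {ι : Type*} (s : Finset ι) (g : ι → ℕ) (c : ℕ) :
    #(s.image fun x => g x + c) = #(s.image g) := by
  rw [← card_image_of_injective (s.image g) (add_left_injective c), image_image]
  rfl

section JoinLabel

variable {U : Type*} [Fintype U]

def joinLabel (f : Sym2 U → ℕ) (q : ℕ) (M : SemiMagicSquare U) : Sym2 (U ⊕ U) → ℕ :=
  Sym2.lift ⟨fun x y => match x, y with
    | inl a, inl b => f s(a, b)
    | inr a, inr b => f s(a, b) + q
    | inl a, inr b => 2 * q + 1 + M.entry a b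
    | inr b, inl a => 2 * q + 1 + M.entry a b,
    by rintro (a | a) (b | b) <;> simp [Sym2.eq_swap]⟩

variable (f : Sym2 U → ℕ) (q : ℕ) (M : SemiMagicSquare U)

@[simp] lemma joinLabel_inl_inl (a b : U) : joinLabel f q M s(inl a, inl b) = f s(a, b) := rfl

@[simp] lemma joinLabel_inr_inr (a b : U) : joinLabel f q M s(inr a, inr b) = f s(a, b) + q := rfl

@[simp] lemma joinLabel_inl_inr (a b : U) :
    joinLabel f q M s(inl a, inr b) = 2 * q + 1 + M.entry a b := rfl

@[simp] lemma joinLabel_inr_inl (a b : U) :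
    joinLabel f q M s(inr b, inl a) = 2 * q + 1 + M.entry a b := rfl

end JoinLabel

section LocalAntimagic

variable {U : Type*} [Fintype U] [DecidableEq U] (H : SimpleGraph U) [DecidableRel H.Adj]

lemma fplus_eq_sum_ite (f : Sym2 U → ℕ) (v : U) :
    fplus H f v = ∑ w, if H.Adj v w then f s(v, w) else 0 := by
  have hinc : H.edgeFinset.filter (v ∈ ·) = (univ.filter (H.Adj v)).image (s(v, ·)) := by
    ext e
    induction e with
    | _ x y =>
      simp only [mem_filter, SimpleGraph.mem_edgeFinset, SimpleGraph.mem_edgeSet, Sym2.mem_iff,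
        mem_image, mem_univ, true_and, Sym2.eq_iff]
      grind [SimpleGraph.adj_comm]
  rw [fplus, hinc, sum_image fun _ _ _ _ h => Sym2.congr_right.mp h, sum_filter]

lemma fplus_add_const (f : Sym2 U → ℕ) (c : ℕ) (v : U) :
    fplus H (fun e => f e + c) v = fplus H f v + c * H.degree v := by
  rw [fplus, fplus, sum_add_distrib, sum_const, ← H.incidenceFinset_eq_filter,
    H.card_incidenceFinset_eq_degree, smul_eq_mul, mul_comm]

lemma fplus_le {f : Sym2 U → ℕ} {q : ℕ} (hf : Set.MapsTo f H.edgeFinset (Icc 1 q)) (v : U) :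
    fplus H f v ≤ q * H.degree v := by
  rw [fplus, ← H.incidenceFinset_eq_filter, ← H.card_incidenceFinset_eq_degree, mul_comm,
    ← smul_eq_mul]
  exact sum_le_card_nsmul _ _ _ fun e he =>
    (mem_Icc.mp (hf (H.incidenceFinset_subset v he))).2

lemma one_le_fplus {f : Sym2 U → ℕ} {q : ℕ} (hf : Set.MapsTo f H.edgeFinset (Icc 1 q)) {v : U}
    (hv : 0 < H.degree v) :
    1 ≤ fplus H f v := by
  rw [← H.card_incidenceFinset_eq_degree, card_pos] at hv
  obtain ⟨e, he⟩ := hv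
  rw [fplus, ← H.incidenceFinset_eq_filter]
  exact (mem_Icc.mp (hf (H.incidenceFinset_subset v he))).1.trans (single_le_sum (by simp) he)

variable (f : Sym2 U → ℕ) (q : ℕ) (M : SemiMagicSquare U)

lemma fplus_joinLabel_inl (v : U) :
    fplus (joinG H H) (joinLabel f q M) (inl v) =
      fplus H f v + (Fintype.card U * (2 * q + 1) + M.magicSum) := by
  rw [fplus_eq_sum_ite, Fintype.sum_sum_type, fplus_eq_sum_ite]
  simp only [joinG_adj_inl_inl, joinG_adj_inl_inr, joinLabel_inl_inl, joinLabel_inl_inr, if_true,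
    sum_add_distrib, sum_const, card_univ, smul_eq_mul, M.sum_row]
  ring

lemma fplus_joinLabel_inr (v : U) :
    fplus (joinG H H) (joinLabel f q M) (inr v) =
      fplus H f v + q * H.degree v + (Fintype.card U * (2 * q + 1) + M.magicSum) := by
  rw [fplus_eq_sum_ite, Fintype.sum_sum_type, ← fplus_add_const, fplus_eq_sum_ite, add_comm]
  simp only [joinG_adj_inr_inr, joinG_adj_inr_inl, joinLabel_inr_inr, joinLabel_inr_inl, if_true,
    sum_add_distrib, sum_const, card_univ, smul_eq_mul, M.sum_col]
  ring

variable {H f q} {s : ℕ}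

lemma fplus_joinLabel_inl_lt_inr (hreg : H.IsRegularOfDegree s) (hs : 0 < s)
    (hf : Set.MapsTo f H.edgeFinset (Icc 1 q)) (u w : U) :
    fplus (joinG H H) (joinLabel f q M) (inl u) < fplus (joinG H H) (joinLabel f q M) (inr w) := by
  have hu := fplus_le H hf u
  have hw := one_le_fplus H hf (v := w) (hreg w ▸ hs)
  rw [fplus_joinLabel_inl, fplus_joinLabel_inr, hreg w]
  rw [hreg u] at hu
  omega

lemma bijOn_joinLabel (hf : Set.BijOn f H.edgeFinset (Icc 1 #H.edgeFinset)) :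
    Set.BijOn (joinLabel f #H.edgeFinset M) (joinG H H).edgeFinset
      (Icc 1 #(joinG H H).edgeFinset) := by
  set q := #H.edgeFinset
  have hcard : #(joinG H H).edgeFinset = 2 * q + Fintype.card U * Fintype.card U := by
    rw [card_edgeFinset_joinG]; ring
  have hlabel {a b : U} (h : H.Adj a b) : 1 ≤ f s(a, b) ∧ f s(a, b) ≤ q := by
    simpa using hf.mapsTo (by simpa using h)
  have hmaps : Set.MapsTo (joinLabel f q M) (joinG H H).edgeFinset
      (Icc 1 #(joinG H H).edgeFinset) := by
    intro e he
    induction e with | _ x y => ?_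
    rcases x with a | a <;> rcases y with b | b <;>
      simp only [coe_Icc, Set.mem_Icc, hcard, mem_coe, SimpleGraph.mem_edgeFinset,
        SimpleGraph.mem_edgeSet, joinG_adj_inl_inl, joinG_adj_inr_inr] at he ⊢
    · have := hlabel he; simp only [joinLabel_inl_inl]; omega
    · have := M.entry_lt a b; simp only [joinLabel_inl_inr]; omega
    · have := M.entry_lt b a; simp only [joinLabel_inr_inl]; omega
    · have := hlabel he; simp only [joinLabel_inr_inr]; omega
  have hsurj : Set.SurjOn (joinLabel f q M) (joinG H H).edgeFinset
      (Icc 1 #(joinG H H).edgeFinset) := by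
    intro y hy
    simp only [coe_Icc, Set.mem_Icc, hcard] at hy
    rcases le_or_gt y q with hyq | hyq
    · obtain ⟨e, he, rfl⟩ := hf.surjOn (by simpa using ⟨hy.1, hyq⟩ : y ∈ (Icc 1 q : Set ℕ))
      induction e with | _ a b => exact ⟨s(inl a, inl b), by simpa using he, rfl⟩
    rcases le_or_gt y (2 * q) with hy2q | hy2q
    · obtain ⟨e, he, hey⟩ :=
        hf.surjOn (by simp; omega : y - q ∈ (Icc 1 q : Set ℕ))
      induction e with | _ a b =>
        exact ⟨s(inr a, inr b), by simpa using he, by simp only [joinLabel_inr_inr, hey]; omega⟩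
    · obtain ⟨⟨a, b⟩, -, hab⟩ := M.surjOn (mem_range.mpr (by omega : y - (2 * q + 1) < _))
      simp only [Function.uncurry_apply_pair] at hab
      exact ⟨s(inl a, inr b), by simp, by simp only [joinLabel_inl_inr]; omega⟩
  exact ⟨hmaps, injOn_of_surjOn_of_card_le _ hmaps hsurj (by simp), hsurj⟩

theorem isLocalAntimagic_joinLabel (hreg : H.IsRegularOfDegree s) (hs : 0 < s)
    (hf : IsLocalAntimagic H f) : IsLocalAntimagic (joinG H H) (joinLabel f #H.edgeFinset M) := by
  refine ⟨bijOn_joinLabel M hf.1, ?_⟩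
  have hlt := fplus_joinLabel_inl_lt_inr M hreg hs hf.1.mapsTo
  rintro (u | u) (v | v) huv
  · rw [fplus_joinLabel_inl, fplus_joinLabel_inl, Ne, add_left_inj]
    exact hf.2 huv
  · exact (hlt u v).ne
  · exact (hlt v u).ne'
  · rw [fplus_joinLabel_inr, fplus_joinLabel_inr, Ne, add_left_inj, hreg u, hreg v, add_left_inj]
    exact hf.2 huv

theorem colorCount_joinLabel (hreg : H.IsRegularOfDegree s) (hs : 0 < s)
    (hf : Set.MapsTo f H.edgeFinset (Icc 1 q)) :
    colorCount (joinG H H) (joinLabel f q M) = 2 * colorCount H f := by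
  set L := univ.image (fun v => fplus (joinG H H) (joinLabel f q M) (inl v))
  set R := univ.image (fun v => fplus (joinG H H) (joinLabel f q M) (inr v))
  have hsplit : univ.image (fplus (joinG H H) (joinLabel f q M)) = L ∪ R := by
    ext; simp [L, R, Sum.exists]
  have hLR : Disjoint L R := by
    simp only [L, R, disjoint_left, mem_image, mem_univ, true_and]
    rintro _ ⟨u, rfl⟩ ⟨w, hw⟩
    exact (fplus_joinLabel_inl_lt_inr M hreg hs hf u w).ne' hw
  have hL : #L = colorCount H f := by
    simp only [L, fplus_joinLabel_inl]
    rw [card_image_add_const, colorCount]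
  have hR : #R = colorCount H f := by
    simp only [R, fplus_joinLabel_inr, hreg _]
    rw [card_image_add_const, card_image_add_const, colorCount]
  rw [colorCount, hsplit, card_union_of_disjoint hLR, hL, hR, two_mul]

end LocalAntimagic

lemma SimpleGraph.IsRegularOfDegree.card_eq_zero_or_lt_card {U : Type*} [Fintype U]
    {H : SimpleGraph U} [DecidableRel H.Adj] {s : ℕ} (h : H.IsRegularOfDegree s) :
    Fintype.card U = 0 ∨ s < Fintype.card U := by
  rcases isEmpty_or_nonempty U with hU | ⟨⟨v⟩⟩
  · exact .inl Fintype.card_eq_zero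
  · exact .inr (h v ▸ H.degree_lt_card_verts v)

section ChiLA

variable {U : Type*} [Fintype U] [DecidableEq U] (H : SimpleGraph U) [DecidableRel H.Adj]

theorem exists_isLocalAntimagic_joinG_self {s : ℕ} (hreg : H.IsRegularOfDegree s) (hs : 2 ≤ s)
    {f : Sym2 U → ℕ} (hf : IsLocalAntimagic H f) :
    ∃ g, IsLocalAntimagic (joinG H H) g ∧ colorCount (joinG H H) g = 2 * colorCount H f := by
  have hU := hreg.card_eq_zero_or_lt_card
  obtain ⟨M⟩ := SemiMagicSquare.nonempty (ι := U) (by omega) (by omega)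
  exact ⟨_, isLocalAntimagic_joinLabel M hreg (by omega) hf,
    colorCount_joinLabel M hreg (by omega) hf.1.mapsTo⟩

lemma chromaticNumber_le_colorCount {f : Sym2 U → ℕ} (hf : IsLocalAntimagic H f) :
    H.chromaticNumber ≤ colorCount H f :=
  (H.colorable_card_image _ hf.2).chromaticNumber_le

lemma chiLA_eq_colorCount {f : Sym2 U → ℕ} (hf : IsLocalAntimagic H f)
    (h : H.chromaticNumber = colorCount H f) : chiLA H = colorCount H f :=
  le_antisymm (Nat.sInf_le ⟨f, hf, rfl⟩) <| le_csInf ⟨_, f, hf, rfl⟩ fun _ ⟨g, hg, hgt⟩ =>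
    hgt ▸ by exact_mod_cast h ▸ chromaticNumber_le_colorCount H hg

lemma exists_isLocalAntimagic_colorCount_eq_chiLA (h : H.chromaticNumber = chiLA H) :
    ∃ f, IsLocalAntimagic H f ∧ colorCount H f = chiLA H := by
  by_cases hS : {t | ∃ f, IsLocalAntimagic H f ∧ colorCount H f = t}.Nonempty
  · exact Nat.sInf_mem hS
  have hchi : chiLA H = 0 := by rw [chiLA, Set.not_nonempty_iff_eq_empty.mp hS, Nat.sInf_empty]
  have : IsEmpty U := SimpleGraph.chromaticNumber_eq_zero_iff.mp (by rw [h, hchi]; rfl)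
  refine absurd ⟨0, 0, ⟨?_, isEmptyElim⟩, by simp [colorCount]⟩ hS
  simp [Set.eq_empty_of_isEmpty, Finset.eq_empty_of_isEmpty]

end ChiLA

section IterJoin

variable {α : Type*} [Fintype α]

lemma card_iterV (k : ℕ) : Fintype.card (iterV α k) = 2 ^ k * Fintype.card α := by
  induction k with
  | zero => simp only [pow_zero, one_mul]; rfl
  | succ k ih =>
    rw [show Fintype.card (iterV α (k + 1)) = _ + _ from Fintype.card_sum, ih, pow_succ]
    ring

variable (G : SimpleGraph α)

lemma isRegularOfDegree_iterJoin [DecidableRel G.Adj] {r : ℕ} (h : G.IsRegularOfDegree r) (k : ℕ) :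
    (iterJoin G k).IsRegularOfDegree (r + (2 ^ k - 1) * Fintype.card α) := by
  induction k with
  | zero =>
    simp only [pow_zero, Nat.sub_self, zero_mul, add_zero]
    exact h
  | succ k ih =>
    have hk : 2 ^ (k + 1) - 1 = (2 ^ k - 1) + 2 ^ k := by
      have := Nat.one_le_two_pow (n := k)
      rw [pow_succ]
      omega
    rw [hk, add_mul, ← add_assoc, ← card_iterV]
    exact ih.joinG_self

lemma chromaticNumber_iterJoin {c : ℕ} (h : G.chromaticNumber = c) (k : ℕ) :
    (iterJoin G k).chromaticNumber = (2 ^ k * c : ℕ) := by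
  induction k with
  | zero =>
    simp only [pow_zero, one_mul]
    exact h
  | succ k ih =>
    rw [pow_succ, mul_comm _ 2, mul_assoc, two_mul]
    exact chromaticNumber_joinG _ _ ih ih

theorem exists_isLocalAntimagic_iterJoin [DecidableEq α] [DecidableRel G.Adj] {r : ℕ} (hr : 2 ≤ r)
    (hreg : G.IsRegularOfDegree r) {f : Sym2 α → ℕ} (hf : IsLocalAntimagic G f) (k : ℕ) :
    ∃ g, IsLocalAntimagic (iterJoin G k) g ∧
      colorCount (iterJoin G k) g = 2 ^ k * colorCount G f := by
  induction k with
  | zero => exact ⟨f, hf, by simp only [pow_zero, one_mul]; rfl⟩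
  | succ k ih =>
    obtain ⟨g, hg, hgc⟩ := ih
    obtain ⟨g', hg', hg'c⟩ := exists_isLocalAntimagic_joinG_self (iterJoin G k)
      (isRegularOfDegree_iterJoin G hreg k) (by omega) hg
    refine ⟨g', hg', ?_⟩
    rw [pow_succ, mul_comm _ 2, mul_assoc, ← hgc]
    exact hg'c

end IterJoin

theorem chiLA_iterated_self_join (G : SimpleGraph V) [DecidableRel G.Adj] (r p χ : ℕ)
    (hr : 2 ≤ r) (hp : Fintype.card V = p) (hreg : G.IsRegularOfDegree r)
    (h1 : chiLA G = χ) (h2 : G.chromaticNumber = (χ : ℕ∞)) (k : ℕ) :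
    (iterJoin G k).IsRegularOfDegree (r + (2 ^ k - 1) * p) ∧
      Fintype.card (iterV V k) = 2 ^ k * p ∧
      chiLA (iterJoin G k) = 2 ^ k * χ ∧
      (iterJoin G k).chromaticNumber = ((2 ^ k * χ : ℕ) : ℕ∞) := by
  subst hp h1
  obtain ⟨f, hf, hfχ⟩ := exists_isLocalAntimagic_colorCount_eq_chiLA G h2
  obtain ⟨g, hg, hgχ⟩ := exists_isLocalAntimagic_iterJoin G hr hreg hf k
  have hχ := chromaticNumber_iterJoin G h2 k
  rw [hfχ] at hgχ
  exact ⟨isRegularOfDegree_iterJoin G hreg k, card_iterV k,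
    hgχ ▸ chiLA_eq_colorCount _ hg (hgχ ▸ hχ), hχ⟩
end

section
/- If three pairwise disjoint 3-subsets of {1,...,12} each have sum 15, then the elements 10, 11, 12 all lie outside the three subsets, and any two of {10,11,12} together with any third label from the remaining unused labels sum to more than 21. -/
open Finset

/-- If three pairwise disjoint 3-subsets of `{1,…,12}` each sum to 15, then `10, 11, 12`
all lie outside the three subsets, and any two of `{10,11,12}` together with any third
label among the remaining unused labels sum to more than 21. -/
theorem unused_labels_of_disjoint_triples (A B C : Finset ℕ)
    (hA : A ⊆ Finset.Icc 1 12) (hB : B ⊆ Finset.Icc 1 12) (hC : C ⊆ Finset.Icc 1 12)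
    (cA : A.card = 3) (cB : B.card = 3) (cC : C.card = 3)
    (sA : ∑ x ∈ A, x = 15) (sB : ∑ x ∈ B, x = 15) (sC : ∑ x ∈ C, x = 15)
    (hAB : Disjoint A B) (hAC : Disjoint A C) (hBC : Disjoint B C) :
    (10 ∉ A ∪ B ∪ C ∧ 11 ∉ A ∪ B ∪ C ∧ 12 ∉ A ∪ B ∪ C) ∧
      ∀ x y z : ℕ, x ∈ ({10, 11, 12} : Finset ℕ) → y ∈ ({10, 11, 12} : Finset ℕ) →
        x ≠ y → z ∈ Finset.Icc 1 12 → z ∉ A ∪ B ∪ C → z ≠ x → z ≠ y →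
        21 < x + y + z := by
  set S : Finset ℕ := A ∪ B ∪ C with hS
  have hSsub : S ⊆ Finset.Icc 1 12 := by
    intro x hx
    simp only [hS, Finset.mem_union] at hx
    rcases hx with (h | h) | h
    · exact hA h
    · exact hB h
    · exact hC h
  have hABC : Disjoint (A ∪ B) C := Finset.disjoint_union_left.mpr ⟨hAC, hBC⟩
  have hcardS : S.card = 9 := by
    rw [hS, Finset.card_union_of_disjoint hABC, Finset.card_union_of_disjoint hAB,
      cA, cB, cC]
  have hsumS : ∑ x ∈ S, x = 45 := by
    rw [hS, Finset.sum_union hABC, Finset.sum_union hAB, sA, sB, sC]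
  set T : Finset ℕ := Finset.Icc 1 12 \ S with hT
  have hcardT : T.card = 3 := by
    rw [hT, Finset.card_sdiff_of_subset hSsub, hcardS, Nat.card_Icc]
  have hsumT : ∑ x ∈ T, x = 33 := by
    have h1 : (∑ x ∈ T, x) + ∑ x ∈ S, x = ∑ x ∈ Finset.Icc 1 12, x :=
      Finset.sum_sdiff hSsub
    have htot : ∑ x ∈ Finset.Icc 1 12, x = 78 := by decide
    omega
  obtain ⟨a, b, c, hab, hac, hbc, hTeq⟩ := Finset.card_eq_three.mp hcardT
  have ha : a ∈ Finset.Icc 1 12 := Finset.sdiff_subset (show _ ∈ T by rw [hTeq]; simp)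
  have hb : b ∈ Finset.Icc 1 12 := Finset.sdiff_subset (show _ ∈ T by rw [hTeq]; simp)
  have hc : c ∈ Finset.Icc 1 12 := Finset.sdiff_subset (show _ ∈ T by rw [hTeq]; simp)
  simp only [Finset.mem_Icc] at ha hb hc
  have habc : a + b + c = 33 := by
    rw [hTeq] at hsumT
    rw [Finset.sum_insert (by simp [hab, hac]), Finset.sum_insert (by simp [hbc]),
      Finset.sum_singleton] at hsumT
    omega
  have key : ∀ n : ℕ, n = 10 ∨ n = 11 ∨ n = 12 → n ∉ S := by
    intro n hn hnS
    have hnT : n ∈ T := by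
      rw [hTeq]
      simp only [Finset.mem_insert, Finset.mem_singleton]
      omega
    rw [hT, Finset.mem_sdiff] at hnT
    exact hnT.2 hnS
  refine ⟨⟨key 10 (by omega), key 11 (by omega), key 12 (by omega)⟩, ?_⟩
  intro x y z hx hy hxy hz _ _ _
  simp only [Finset.mem_insert, Finset.mem_singleton] at hx hy
  simp only [Finset.mem_Icc] at hz
  omega
end
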